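/- arXiv:2304.11387 — 2 statements merged into one kernel-verified Lean document; each statement's English description precedes it below -/
import Mathlib

section
/- For every positive integer N and every base-phi representation a of N, a can be obtained from the Bergman expansion of N by finitely many golden mean flips; that is, the pair (Bergman expansion of N, a) lies in the reflexive–transitive closure of the relation Flip. -/
noncomputable section

open Finset

/-- The golden ratio φ = (1+√5)/2. -/
def goldenPhi : ℝ := (1 + Real.sqrt 5) / 2

/-- `a` is a base-phi representation of `N`: a finitely supported 0-1 digit
function on `ℤ` whose associated sum of powers of φ equals `N`. -/
def IsBasePhiRep (N : ℕ) (a : ℤ →₀ ℕ) : Prop :=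
  (∀ i, a i ≤ 1) ∧ (N : ℝ) = ∑ i ∈ a.support, (a i : ℝ) * goldenPhi ^ i

/-- `d` is the Bergman expansion of `N`: a base-phi representation with no
two consecutive digits equal to 1. -/
def IsBergman (N : ℕ) (d : ℤ →₀ ℕ) : Prop :=
  IsBasePhiRep N d ∧ ∀ i : ℤ, d i * d (i + 1) = 0

/-- The Knott condition: the expansion does not end in the digits 011, i.e.
letting `m` be the minimum of the support, not (a(m+1) = 1 and a(m+2) = 0). -/
def KnottCond (a : ℤ →₀ ℕ) : Prop :=
  ∀ m : ℤ, a.support.min = (m : WithTop ℤ) → ¬(a (m + 1) = 1 ∧ a (m + 2) = 0)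

/-- The set of base-phi representations of `N` satisfying the Knott condition. -/
def KnottSet (N : ℕ) : Set (ℤ →₀ ℕ) :=
  {a | IsBasePhiRep N a ∧ KnottCond a}

/-- `Flip a a'` : `a'` is obtained from `a` by a golden mean flip
`100 → 011` at some index `i`. -/
def Flip (a a' : ℤ →₀ ℕ) : Prop :=
  ∃ i : ℤ, a (i + 1) = 1 ∧ a i = 0 ∧ a (i - 1) = 0 ∧
    a' (i + 1) = 0 ∧ a' i = 1 ∧ a' (i - 1) = 1 ∧
    ∀ j : ℤ, j ≠ i + 1 → j ≠ i → j ≠ i - 1 → a' j = a j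

/-- The Lucas numbers: L₀ = 2, L₁ = 1, L_{n+2} = L_{n+1} + L_n. -/
def lucasNum : ℕ → ℕ
  | 0 => 2
  | 1 => 1
  | n + 2 => lucasNum (n + 1) + lucasNum n

/-- The number of representations of `M` as a sum of distinct Fibonacci
numbers `F_i` with `i ≥ 2`. -/
def TotFIB (M : ℕ) : ℕ :=
  {S : Finset ℕ | (∀ i ∈ S, 2 ≤ i) ∧ ∑ i ∈ S, Nat.fib i = M}.ncard

lemma phi_pos : 0 < goldenPhi := by
  have h5 : 0 ≤ Real.sqrt 5 := Real.sqrt_nonneg 5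
  unfold goldenPhi; linarith

lemma one_lt_phi : 1 < goldenPhi := by
  have h5 : 1 < Real.sqrt 5 := by
    have : Real.sqrt 1 < Real.sqrt 5 := Real.sqrt_lt_sqrt (by norm_num) (by norm_num)
    simpa using this
  unfold goldenPhi; linarith

lemma phi_ne_zero : goldenPhi ≠ 0 := ne_of_gt phi_pos

lemma phi_sq : goldenPhi ^ 2 = goldenPhi + 1 := by
  have h5 : Real.sqrt 5 ^ 2 = 5 := Real.sq_sqrt (by norm_num)
  unfold goldenPhi; nlinarith [h5]

lemma phi_zpow (m : ℤ) : goldenPhi ^ (m + 1) = goldenPhi ^ m + goldenPhi ^ (m - 1) := by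
  have h : goldenPhi ^ (m - 1) * goldenPhi ^ (2:ℤ) = goldenPhi ^ (m - 1) * (goldenPhi + 1) := by
    rw [show ((2:ℤ)) = ((2:ℕ):ℤ) by norm_num, zpow_natCast, phi_sq]
  rw [← zpow_add₀ phi_ne_zero] at h
  have h1 : goldenPhi ^ m = goldenPhi ^ (m - 1) * goldenPhi := by
    rw [← zpow_add_one₀ phi_ne_zero]; ring_nf
  have h2 : m - 1 + 2 = m + 1 := by ring
  rw [h2] at h
  rw [h, h1]; ring

def phiVal (a : ℤ →₀ ℕ) : ℝ := ∑ i ∈ a.support, (a i : ℝ) * goldenPhi ^ i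

lemma phiVal_eq_sum {a : ℤ →₀ ℕ} {s : Finset ℤ} (hs : a.support ⊆ s) :
    phiVal a = ∑ i ∈ s, (a i : ℝ) * goldenPhi ^ i := by
  refine Finset.sum_subset hs ?_
  intro x _ hx
  have : a x = 0 := Finsupp.notMem_support_iff.mp hx
  simp [this]

lemma lower_bound_aux (n : ℕ) (e : ℤ →₀ ℕ) (h1 : ∀ i, e i ≤ 1)
    (h2 : ∀ i : ℤ, e i * e (i + 1) = 0) :
    ∀ j : ℤ, (e.support.filter (· < j)).card ≤ n →
      ∑ k ∈ e.support.filter (· < j), (e k : ℝ) * goldenPhi ^ k < goldenPhi ^ j := by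
  induction n with
  | zero =>
    intro j hc
    have : e.support.filter (· < j) = ∅ := Finset.card_eq_zero.mp (Nat.le_zero.mp hc)
    rw [this]
    simpa using zpow_pos phi_pos j
  | succ n ih =>
    intro j hc
    rcases Finset.eq_empty_or_nonempty (e.support.filter (· < j)) with he | hne
    · rw [he]; simpa using zpow_pos phi_pos j
    · set s := e.support.filter (· < j) with hs
      obtain ⟨m, hm, hmax⟩ := s.exists_max_image id hne
      have hm' : m ∈ e.support ∧ m < j := by
        have := Finset.mem_filter.mp hm; exact ⟨this.1, by simpa using this.2⟩
      have hem : e m = 1 := by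
        have := Finsupp.mem_support_iff.mp hm'.1
        have := h1 m; omega
      have hem1 : e (m - 1) = 0 := by
        have := h2 (m - 1)
        rw [show m - 1 + 1 = m by ring, hem] at this
        omega
      have hsub : s.erase m = e.support.filter (· < m - 1) := by
        ext k
        simp only [Finset.mem_erase, hs, Finset.mem_filter]
        constructor
        · rintro ⟨hk, hks, hkj⟩
          refine ⟨hks, ?_⟩
          have hkm : k ≤ m := hmax k (Finset.mem_filter.mpr ⟨hks, hkj⟩)
          have : k ≠ m - 1 := by
            rintro rfl
            exact (Finsupp.mem_support_iff.mp hks) hem1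
          simp only [decide_eq_true_eq] at *
          omega
        · rintro ⟨hks, hk⟩
          simp only [decide_eq_true_eq] at *
          have := hm'.2
          exact ⟨by omega, hks, by omega⟩
      have hcard : (e.support.filter (· < m - 1)).card ≤ n := by
        rw [← hsub]
        have := Finset.card_erase_of_mem hm
        omega
      have ihm := ih (m - 1) hcard
      rw [← hsub] at ihm
      have hsum : ∑ k ∈ s, (e k : ℝ) * goldenPhi ^ k
          = (e m : ℝ) * goldenPhi ^ m + ∑ k ∈ s.erase m, (e k : ℝ) * goldenPhi ^ k :=
        (Finset.add_sum_erase s _ hm).symm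
      rw [hsum, hem]
      push_cast
      have h3 : goldenPhi ^ m + goldenPhi ^ (m - 1) = goldenPhi ^ (m + 1) := (phi_zpow m).symm
      have h4 : goldenPhi ^ (m + 1) ≤ goldenPhi ^ j :=
        zpow_le_zpow_right₀ (le_of_lt one_lt_phi) (by omega)
      linarith

lemma bergman_unique (d e : ℤ →₀ ℕ)
    (hd1 : ∀ i, d i ≤ 1) (hd2 : ∀ i : ℤ, d i * d (i + 1) = 0)
    (he1 : ∀ i, e i ≤ 1) (he2 : ∀ i : ℤ, e i * e (i + 1) = 0)
    (hval : phiVal d = phiVal e) : d = e := by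
  by_contra hne
  -- set of disagreement
  set s := (d.support ∪ e.support).filter (fun k => d k ≠ e k) with hs
  have hsne : s.Nonempty := by
    have : ∃ k, d k ≠ e k := by
      by_contra h
      push_neg at h
      exact hne (Finsupp.ext h)
    obtain ⟨k, hk⟩ := this
    refine ⟨k, Finset.mem_filter.mpr ⟨?_, hk⟩⟩
    rcases Nat.eq_zero_or_pos (d k) with h0 | h0
    · have : e k ≠ 0 := by omega
      exact Finset.mem_union_right _ (Finsupp.mem_support_iff.mpr this)
    · exact Finset.mem_union_left _ (Finsupp.mem_support_iff.mpr (by omega))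
  obtain ⟨j, hj, hjmax⟩ := s.exists_max_image id hsne
  have hjd : d j ≠ e j := (Finset.mem_filter.mp hj).2
  -- general claim: if x j = 1, y j = 0 then phiVal y < phiVal x
  have key : ∀ x y : ℤ →₀ ℕ, (∀ i, x i ≤ 1) → (∀ i, y i ≤ 1) →
      (∀ i : ℤ, y i * y (i + 1) = 0) →
      x j = 1 → y j = 0 → (∀ k, j < k → x k = y k) → phiVal y < phiVal x := by
    intro x y hx1 hy1 hy2 hxj hyj hagree
    set t := x.support ∪ y.support with ht
    have hxs : x.support ⊆ t := Finset.subset_union_left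
    have hys : y.support ⊆ t := Finset.subset_union_right
    rw [phiVal_eq_sum hxs, phiVal_eq_sum hys]
    rw [← Finset.sum_filter_add_sum_filter_not t (fun k => j < k),
        ← Finset.sum_filter_add_sum_filter_not t (fun k => j < k)
          (fun k => (x k : ℝ) * goldenPhi ^ k)]
    have hupper : ∑ k ∈ t.filter (fun k => j < k), (y k : ℝ) * goldenPhi ^ k
        = ∑ k ∈ t.filter (fun k => j < k), (x k : ℝ) * goldenPhi ^ k := by
      refine Finset.sum_congr rfl ?_
      intro k hk
      have := (Finset.mem_filter.mp hk).2
      rw [hagree k this]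
    rw [hupper]
    have hlowlt : ∑ k ∈ t.filter (fun k => ¬ j < k), (y k : ℝ) * goldenPhi ^ k
        < ∑ k ∈ t.filter (fun k => ¬ j < k), (x k : ℝ) * goldenPhi ^ k := by
      -- y lower part: y j = 0, so equals sum over k < j
      have hy_eq : ∑ k ∈ t.filter (fun k => ¬ j < k), (y k : ℝ) * goldenPhi ^ k
          = ∑ k ∈ y.support.filter (· < j), (y k : ℝ) * goldenPhi ^ k := by
        rw [eq_comm]
        refine Finset.sum_subset ?_ ?_
        · intro k hk
          have hk' := Finset.mem_filter.mp hk
          refine Finset.mem_filter.mpr ⟨hys hk'.1, ?_⟩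
          have : k < j := by simpa using hk'.2
          omega
        · intro k hk hk'
          rcases Nat.eq_zero_or_pos (y k) with h0 | h0
          · simp [h0]
          · exfalso
            have hk1 := Finset.mem_filter.mp hk
            have hkj : ¬ j < k := hk1.2
            have hkne : k ≠ j := by rintro rfl; omega
            have : k < j := by omega
            exact hk' (Finset.mem_filter.mpr ⟨Finsupp.mem_support_iff.mpr (by omega), by simpa using this⟩)
      rw [hy_eq]
      have hbound := lower_bound_aux (y.support.filter (· < j)).card y hy1 hy2 j le_rfl
      -- x lower part is at least φ^j
      have hx_ge : goldenPhi ^ j ≤ ∑ k ∈ t.filter (fun k => ¬ j < k), (x k : ℝ) * goldenPhi ^ k := by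
        have hjt : j ∈ t.filter (fun k => ¬ j < k) := by
          refine Finset.mem_filter.mpr ⟨Finset.mem_union_left _ (Finsupp.mem_support_iff.mpr (by omega)), by simp⟩
        have : (x j : ℝ) * goldenPhi ^ j ≤ ∑ k ∈ t.filter (fun k => ¬ j < k), (x k : ℝ) * goldenPhi ^ k := by
          refine Finset.single_le_sum (f := fun k => (x k : ℝ) * goldenPhi ^ k) ?_ hjt
          intro k _
          have := zpow_pos phi_pos k
          positivity
        rw [hxj] at this
        simpa using this
      linarith
    linarith
  -- conclude
  have hagree : ∀ k, j < k → d k = e k := by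
    intro k hk
    by_contra h
    have hks : k ∈ s := by
      refine Finset.mem_filter.mpr ⟨?_, h⟩
      rcases Nat.eq_zero_or_pos (d k) with h0 | h0
      · exact Finset.mem_union_right _ (Finsupp.mem_support_iff.mpr (by omega))
      · exact Finset.mem_union_left _ (Finsupp.mem_support_iff.mpr (by omega))
    have := hjmax k hks
    simp only [id] at this
    omega
  have hdj := hd1 j
  have hej := he1 j
  interval_cases hdjv : d j <;> interval_cases hejv : e j
  · exact hjd (by omega)
  · exact absurd hval (ne_of_lt (key e d he1 hd1 hd2 hejv hdjv (fun k hk => (hagree k hk).symm)))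
  · exact absurd hval (ne_of_gt (key d e hd1 he1 he2 hdjv hejv hagree))
  · exact hjd (by omega)

lemma sum_update_phi (f : ℤ → ℕ) (k : ℤ) (v : ℕ) (s : Finset ℤ) (hk : k ∈ s) :
    ∑ i ∈ s, ((Function.update f k v) i : ℝ) * goldenPhi ^ i
      = ∑ i ∈ s, (f i : ℝ) * goldenPhi ^ i + ((v : ℝ) - (f k : ℝ)) * goldenPhi ^ k := by
  have h1 : ∀ i ∈ s, ((Function.update f k v) i : ℝ) * goldenPhi ^ i
      = Function.update (fun i => (f i : ℝ) * goldenPhi ^ i) k ((v : ℝ) * goldenPhi ^ k) i := by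
    intro i _
    by_cases h : i = k
    · subst h; simp
    · simp [Function.update_of_ne h]
  rw [Finset.sum_congr rfl h1, Finset.sum_update_of_mem hk]
  have h2 : ∑ i ∈ s, (f i : ℝ) * goldenPhi ^ i
      = (f k : ℝ) * goldenPhi ^ k + ∑ i ∈ s \ {k}, (f i : ℝ) * goldenPhi ^ i := by
    rw [Finset.sum_eq_add_sum_sdiff_singleton_of_mem hk]
  rw [h2]; ring

lemma unflip_step (a : ℤ →₀ ℕ) (h1 : ∀ i, a i ≤ 1) (j : ℤ)
    (hj : a j = 1) (hj1 : a (j - 1) = 1) (hj2 : a (j + 1) = 0) :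
    ∃ a' : ℤ →₀ ℕ, Flip a' a ∧ (∀ i, a' i ≤ 1) ∧ phiVal a' = phiVal a ∧
      a'.support.card < a.support.card := by
  classical
  set a' : ℤ →₀ ℕ := ((a.update j 0).update (j - 1) 0).update (j + 1) 1 with ha'
  have hne1 : (j : ℤ) + 1 ≠ j := by omega
  have hne2 : (j : ℤ) + 1 ≠ j - 1 := by omega
  have hne3 : (j : ℤ) - 1 ≠ j := by omega
  have hv1 : a' (j + 1) = 1 := by simp [ha', Finsupp.coe_update]
  have hv2 : a' j = 0 := by
    simp only [ha', Finsupp.coe_update, Function.update_apply]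
    rw [if_neg (by omega : ¬ (j:ℤ) = j + 1), if_neg (by omega : ¬ (j:ℤ) = j - 1)]
    simp
  have hv3 : a' (j - 1) = 0 := by
    simp only [ha', Finsupp.coe_update, Function.update_apply]
    rw [if_neg (by omega : ¬ (j:ℤ) - 1 = j + 1)]
    simp
  have hvo : ∀ k : ℤ, k ≠ j + 1 → k ≠ j → k ≠ j - 1 → a' k = a k := by
    intro k hk1 hk2 hk3
    simp [ha', Finsupp.coe_update, Function.update_apply, hk1, hk2, hk3]
  refine ⟨a', ⟨j, hv1, hv2, hv3, hj2, hj, hj1, fun k hk1 hk2 hk3 => (hvo k hk1 hk2 hk3).symm⟩,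
    ?_, ?_, ?_⟩
  · intro i
    by_cases e1 : i = j + 1
    · subst e1; omega
    by_cases e2 : i = j
    · subst e2; omega
    by_cases e3 : i = j - 1
    · subst e3; omega
    rw [hvo i e1 e2 e3]; exact h1 i
  · -- value preserved
    set s : Finset ℤ := insert (j + 1) (insert j (insert (j - 1) a.support)) with hsdef
    have hjs : j ∈ s := by simp [hsdef]
    have hj1s : j - 1 ∈ s := by simp [hsdef]
    have hj2s : j + 1 ∈ s := by simp [hsdef]
    have hsub : a.support ⊆ s := by
      intro x hx; simp [hsdef, hx]
    have hsub' : a'.support ⊆ s := by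
      intro x hx
      by_cases e1 : x = j + 1
      · subst e1; exact hj2s
      by_cases e2 : x = j
      · subst e2; exact hjs
      by_cases e3 : x = j - 1
      · subst e3; exact hj1s
      have : a' x = a x := hvo x e1 e2 e3
      have hx' : a x ≠ 0 := by
        have h := Finsupp.mem_support_iff.mp hx
        rwa [hvo x e1 e2 e3] at h
      exact hsub (Finsupp.mem_support_iff.mpr hx')
    rw [phiVal_eq_sum hsub', phiVal_eq_sum hsub]
    have e1 : (⇑a' : ℤ → ℕ)
        = Function.update (Function.update (Function.update (⇑a) j 0) (j-1) 0) (j+1) 1 := by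
      simp [ha', Finsupp.coe_update]
    rw [show (fun i => ((a' i : ℕ) : ℝ) * goldenPhi ^ i) = _ from rfl]
    calc ∑ i ∈ s, (a' i : ℝ) * goldenPhi ^ i
        = ∑ i ∈ s, ((Function.update (Function.update (Function.update (⇑a) j 0) (j-1) 0) (j+1) 1) i : ℝ) * goldenPhi ^ i := by
          refine Finset.sum_congr rfl fun i _ => by rw [e1]
      _ = ∑ i ∈ s, (a i : ℝ) * goldenPhi ^ i := by
          rw [sum_update_phi _ _ _ _ hj2s, sum_update_phi _ _ _ _ hj1s,
            sum_update_phi _ _ _ _ hjs]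
          have e2 : (Function.update (⇑a) j 0) (j - 1) = a (j - 1) :=
            Function.update_of_ne hne3 _ _
          have e3 : (Function.update (Function.update (⇑a) j 0) (j-1) 0) (j+1)
              = a (j + 1) := by
            rw [Function.update_of_ne hne2, Function.update_of_ne hne1]
          rw [e2, e3, hj, hj1, hj2]
          have := phi_zpow j
          push_cast
          linarith
  · -- card decreases
    have hsupp : a'.support = insert (j + 1) ((a.support.erase j).erase (j - 1)) := by
      ext k
      simp only [Finsupp.mem_support_iff, Finset.mem_insert, Finset.mem_erase]
      by_cases e1 : k = j + 1
      · subst e1; simp [hv1]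
      by_cases e2 : k = j
      · subst e2
        rw [hv2]
        constructor
        · intro h; exact absurd rfl h
        · rintro (h | ⟨h1, h2, h3⟩)
          · omega
          · exact absurd rfl h2
      by_cases e3 : k = j - 1
      · subst e3
        rw [hv3]
        constructor
        · intro h; exact absurd rfl h
        · rintro (h | ⟨h1, h2, h3⟩)
          · omega
          · exact absurd rfl h1
      · rw [hvo k e1 e2 e3]
        simp [e1, e2, e3]
    have hjmem : j ∈ a.support := Finsupp.mem_support_iff.mpr (by omega)
    have hj1mem : j - 1 ∈ a.support.erase j :=
      Finset.mem_erase.mpr ⟨hne3, Finsupp.mem_support_iff.mpr (by omega)⟩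
    have hnotmem : j + 1 ∉ (a.support.erase j).erase (j - 1) := by
      intro h
      have := Finset.mem_of_mem_erase (Finset.mem_of_mem_erase h)
      exact (Finsupp.mem_support_iff.mp this) hj2
    rw [hsupp, Finset.card_insert_of_notMem hnotmem,
      Finset.card_erase_of_mem hj1mem, Finset.card_erase_of_mem hjmem]
    have h2le : 2 ≤ a.support.card := by
      have : ({j - 1, j} : Finset ℤ) ⊆ a.support := by
        intro x hx
        rcases Finset.mem_insert.mp hx with rfl | hx
        · exact Finset.mem_of_mem_erase hj1mem
        · rw [Finset.mem_singleton.mp hx]; exact hjmem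
      have := Finset.card_le_card this
      rwa [Finset.card_insert_of_notMem (by simp [hne3]), Finset.card_singleton] at this
    omega

/-- Every base-phi representation of a positive integer `N` can be obtained
from the Bergman expansion of `N` by finitely many golden mean flips. -/
theorem bergman_flips_to_any_rep (N : ℕ) (hN : 0 < N)
    (a d : ℤ →₀ ℕ) (ha : IsBasePhiRep N a) (hd : IsBergman N d) :
    Relation.ReflTransGen Flip d a := by
  obtain ⟨⟨hd1, hdval⟩, hd2⟩ := hd
  have main : ∀ n (b : ℤ →₀ ℕ), b.support.card = n → IsBasePhiRep N b →
      Relation.ReflTransGen Flip d b := by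
    intro n
    induction n using Nat.strong_induction_on with
    | _ n ih =>
      intro b hcard hb
      obtain ⟨hb1, hbval⟩ := hb
      by_cases hc : ∃ j : ℤ, b j = 1 ∧ b (j - 1) = 1
      · set P := b.support.filter (fun j => b (j - 1) = 1) with hP
        have hPne : P.Nonempty := by
          obtain ⟨j, hj, hj1⟩ := hc
          exact ⟨j, Finset.mem_filter.mpr ⟨Finsupp.mem_support_iff.mpr (by omega), hj1⟩⟩
        obtain ⟨j, hjP, hjmax⟩ := P.exists_max_image id hPne
        have hjmem := Finset.mem_filter.mp hjP
        have hbj : b j = 1 := by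
          have := Finsupp.mem_support_iff.mp hjmem.1
          have := hb1 j
          omega
        have hbj1 : b (j - 1) = 1 := hjmem.2
        have hbj2 : b (j + 1) = 0 := by
          by_contra h
          have h1 : j + 1 ∈ P := by
            refine Finset.mem_filter.mpr ⟨Finsupp.mem_support_iff.mpr h, ?_⟩
            rw [show j + 1 - 1 = j by ring]
            exact hbj
          have := hjmax _ h1
          simp only [id] at this
          omega
        obtain ⟨b', hflip, hb'1, hb'val, hb'card⟩ := unflip_step b hb1 j hbj hbj1 hbj2
        have hb'rep : IsBasePhiRep N b' := by
          refine ⟨hb'1, ?_⟩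
          have : phiVal b' = phiVal b := hb'val
          have hgoal : (N : ℝ) = phiVal b' := by
            rw [this]
            exact hbval
          exact hgoal
        have hstep := ih b'.support.card (by omega) b' rfl hb'rep
        exact Relation.ReflTransGen.tail hstep hflip
      · push_neg at hc
        have hb2 : ∀ i : ℤ, b i * b (i + 1) = 0 := by
          intro i
          by_contra h
          have h' : b i ≠ 0 ∧ b (i + 1) ≠ 0 := by
            constructor <;> (intro h0; apply h; simp [h0])
          obtain ⟨hi0, hi1⟩ := h'
          have h1 : b (i + 1) = 1 := by have := hb1 (i + 1); omega
          have h2 : b (i + 1 - 1) = 1 := by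
            rw [show i + 1 - 1 = i by ring]
            have := hb1 i
            omega
          exact (hc (i + 1) h1) h2
        have hval : phiVal d = phiVal b := by
          unfold phiVal
          rw [← hdval, ← hbval]
        have heq : d = b := bergman_unique d b hd1 hd2 hb1 hb2 hval
        rw [heq]
  exact main a.support.card a rfl ha
end
end

section
/- For every n ≥ 1, the set K(F_n) of base-phi representations of the n-th Fibonacci number F_n satisfying the Knott condition is finite and has exactly F_n elements. -/
noncomputable section

open Finset

namespace KProof

local notation "φ" => goldenPhi

lemma phi_eq : goldenPhi = Real.goldenRatio := rfl

lemma phi_pos : 0 < φ := by rw [phi_eq]; exact Real.goldenRatio_pos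
lemma phi_ne : φ ≠ 0 := ne_of_gt phi_pos
lemma one_lt_phi : 1 < φ := by rw [phi_eq]; exact Real.one_lt_goldenRatio
lemma phi_lt_two : φ < 2 := by rw [phi_eq]; exact Real.goldenRatio_lt_two
lemma phi_sq : φ ^ 2 = φ + 1 := by rw [phi_eq]; exact Real.goldenRatio_sq

lemma sqrt5_lt : Real.sqrt 5 < 7/3 := by
  rw [show (5:ℝ) = 2.2360679^2 + (5 - 2.2360679^2) by norm_num]
  nlinarith [Real.sq_sqrt (by norm_num : (5:ℝ) ≥ 0), Real.sqrt_nonneg (5:ℝ)]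

lemma sqrt5_gt : (11/5 : ℝ) < Real.sqrt 5 := by
  nlinarith [Real.sq_sqrt (by norm_num : (5:ℝ) ≥ 0), Real.sqrt_nonneg (5:ℝ)]

lemma phi_lt : φ < 5/3 := by unfold goldenPhi; linarith [sqrt5_lt]
lemma phi_gt : (8/5:ℝ) < φ := by unfold goldenPhi; linarith [sqrt5_gt]

-- zpow facts
lemma zpow_add_one (i : ℤ) : φ ^ (i+1) = φ ^ i * φ := zpow_add_one₀ phi_ne i

lemma zpow_rec (i : ℤ) : φ ^ (i+2) = φ ^ (i+1) + φ ^ i := by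
  have h2 : φ ^ (i+2) = φ ^ i * φ ^ (2:ℤ) := by
    rw [← zpow_add₀ phi_ne]
  have : φ ^ (2:ℤ) = φ + 1 := by
    rw [show ((2:ℤ)) = ((2:ℕ):ℤ) by norm_num, zpow_natCast, phi_sq]
  rw [h2, this, zpow_add_one]
  ring

lemma zpow_pos' (i : ℤ) : 0 < φ ^ i := zpow_pos phi_pos i

lemma zpow_lt_zpow {i j : ℤ} (h : i < j) : φ ^ i < φ ^ j :=
  zpow_lt_zpow_right₀ one_lt_phi h

lemma zpow_le_zpow {i j : ℤ} (h : i ≤ j) : φ ^ i ≤ φ ^ j :=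
  zpow_le_zpow_right₀ (le_of_lt one_lt_phi) h

lemma zpow_le_iff {i j : ℤ} : φ ^ i ≤ φ ^ j ↔ i ≤ j := by
  constructor
  · intro h
    by_contra hc
    exact absurd h (not_le.mpr (zpow_lt_zpow (by omega)))
  · exact zpow_le_zpow

lemma zpow_two' : φ ^ (2:ℤ) = φ + 1 := by
  rw [show ((2:ℤ)) = ((2:ℕ):ℤ) by norm_num, zpow_natCast, phi_sq]

lemma phi_inv_two : φ ^ (-2 : ℤ) = 2 - φ := by
  have h1 : φ ^ (-2:ℤ) * φ ^ (2:ℤ) = 1 := by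
    rw [← zpow_add₀ phi_ne]; norm_num
  rw [zpow_two'] at h1
  have h2 : (0:ℝ) < φ + 1 := by linarith [phi_pos]
  have h3 : (2 - φ) * (φ + 1) = 1 := by nlinarith [phi_sq]
  have := mul_right_cancel₀ (ne_of_gt h2) (h1.trans h3.symm)
  exact this

-- the value of a Finset
def vS (S : Finset ℤ) : ℝ := ∑ i ∈ S, φ ^ i

lemma vS_empty : vS ∅ = 0 := rfl

lemma vS_nonneg (S : Finset ℤ) : 0 ≤ vS S :=
  Finset.sum_nonneg fun i _ => le_of_lt (zpow_pos' i)

lemma vS_insert {a : ℤ} {S : Finset ℤ} (h : a ∉ S) : vS (insert a S) = φ ^ a + vS S :=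
  Finset.sum_insert h

lemma vS_erase {a : ℤ} {S : Finset ℤ} (h : a ∈ S) : vS (S.erase a) = vS S - φ ^ a := by
  have := Finset.add_sum_erase S (fun i => φ ^ i) h
  unfold vS; linarith [this]

lemma mem_le_vS {a : ℤ} {S : Finset ℤ} (h : a ∈ S) : φ ^ a ≤ vS S :=
  Finset.single_le_sum (fun i _ => le_of_lt (zpow_pos' i)) h

lemma vS_eq_zero {S : Finset ℤ} (h : vS S = 0) : S = ∅ := by
  by_contra hc
  obtain ⟨a, ha⟩ := Finset.nonempty_of_ne_empty hc
  linarith [mem_le_vS ha, zpow_pos' a]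

lemma vS_ne_zero {S : Finset ℤ} (h : S.Nonempty) : 0 < vS S := by
  obtain ⟨a, ha⟩ := h
  linarith [mem_le_vS ha, zpow_pos' a]

-- geometric sum
lemma sum_Icc (m h : ℤ) (hmh : m ≤ h + 1) :
    ∑ i ∈ Finset.Icc m h, φ ^ i = φ ^ (h+2) - φ ^ (m+1) := by
  have key : ∀ n : ℤ, m - 1 ≤ n → ∑ i ∈ Finset.Icc m n, φ ^ i = φ ^ (n+2) - φ ^ (m+1) := by
    refine Int.le_induction ?_ ?_
    · rw [show Finset.Icc m (m-1) = ∅ by rw [Finset.Icc_eq_empty_iff]; omega]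
      rw [show m - 1 + 2 = m + 1 by ring]
      simp
    · intro n hn ih
      have hIcc : Finset.Icc m (n+1) = insert (n+1) (Finset.Icc m n) := by
        ext x; simp only [Finset.mem_Icc, Finset.mem_insert]; omega
      have hni : (n+1) ∉ Finset.Icc m n := by simp
      rw [hIcc, Finset.sum_insert hni, ih]
      have := zpow_rec (n+1)
      rw [show n+1+2 = n+3 by ring, show n+1+1 = n+2 by ring] at this
      rw [show n+1+2 = n+3 by ring]
      linarith
  exact key h (by omega)

-- upper bound: all elements ≤ h gives vS < φ^(h+2)
lemma vS_lt_of_le {S : Finset ℤ} {h : ℤ} (hb : ∀ i ∈ S, i ≤ h) : vS S < φ ^ (h+2) := by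
  rcases S.eq_empty_or_nonempty with rfl | hS
  · simpa [vS_empty] using zpow_pos' (h+2)
  · set m := S.min' hS with hm
    have hsub : S ⊆ Finset.Icc m h := by
      intro x hx
      simp only [Finset.mem_Icc]
      exact ⟨Finset.min'_le S x hx, hb x hx⟩
    have hle : vS S ≤ ∑ i ∈ Finset.Icc m h, φ ^ i :=
      Finset.sum_le_sum_of_subset_of_nonneg hsub (fun i _ _ => le_of_lt (zpow_pos' i))
    have hmh : m ≤ h + 1 := by
      have := hb m (S.min'_mem hS); omega
    rw [sum_Icc m h hmh] at hle
    linarith [zpow_pos' (m+1)]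

-- forcing: top element must be present
lemma forcing {S : Finset ℤ} {h : ℤ} (hb : ∀ i ∈ S, i ≤ h) (hv : φ ^ (h+1) ≤ vS S) :
    h ∈ S := by
  by_contra hc
  have hb' : ∀ i ∈ S, i ≤ h - 1 := by
    intro i hi
    have := hb i hi
    rcases lt_or_eq_of_le this with h1 | rfl
    · omega
    · exact absurd hi hc
  have := vS_lt_of_le hb'
  rw [show h - 1 + 2 = h + 1 by ring] at this
  linarith

-- elements are bounded by the value
lemma mem_le_of_vS_eq {S : Finset ℤ} {k : ℤ} (hv : vS S = φ ^ k) {a : ℤ} (ha : a ∈ S) :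
    a ≤ k := by
  have := mem_le_vS ha
  rw [hv] at this
  exact zpow_le_iff.mp this


lemma min'_eq {S : Finset ℤ} (hS : S.Nonempty) {m : ℤ} (hm : m ∈ S)
    (hall : ∀ x ∈ S, m ≤ x) : S.min' hS = m :=
  le_antisymm (Finset.min'_le S m hm) (Finset.le_min' S hS m hall)

/-- Bottom lemma: a representation of a pure power φ^k supported strictly
below k must end in the pattern `011`. -/
lemma BOT : ∀ (S : Finset ℤ) (hS : S.Nonempty) (k : ℤ), (∀ i ∈ S, i ≤ k-1) → vS S = φ ^ k →
    S.min' hS + 1 ∈ S ∧ S.min' hS + 2 ∉ S ∧ S.min' hS + 2 ≤ k := by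
  intro S
  induction S using Finset.strongInduction with
  | _ S IH =>
    intro hS k hb hv
    have hk1 : k - 1 ∈ S := by
      apply forcing hb
      rw [show k - 1 + 1 = k by ring, hv]
    set S' := S.erase (k-1) with hS'
    have hvS' : vS S' = φ ^ (k-2) := by
      rw [vS_erase hk1, hv]
      have := zpow_rec (k-2)
      rw [show k-2+2 = k by ring, show k-2+1 = k-1 by ring] at this
      linarith
    have hS'sub : S' ⊂ S := Finset.erase_ssubset hk1
    by_cases hk2 : k - 2 ∈ S'
    · -- S = {k-2, k-1}
      have hvz : vS (S'.erase (k-2)) = 0 := by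
        rw [vS_erase hk2, hvS']; ring
      have hempty := vS_eq_zero hvz
      have hSeq : S = {k-2, k-1} := by
        ext x
        simp only [Finset.mem_insert, Finset.mem_singleton]
        constructor
        · intro hx
          by_cases h1 : x = k-1
          · right; exact h1
          · left
            by_contra h2
            have hx' : x ∈ S'.erase (k-2) := by
              simp only [hS', Finset.mem_erase]
              exact ⟨h2, h1, hx⟩
            rw [hempty] at hx'
            exact absurd hx' (Finset.notMem_empty x)
        · rintro (rfl | rfl)
          · exact Finset.mem_of_mem_erase hk2
          · exact hk1
      have hmin : S.min' hS = k - 2 := by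
        apply min'_eq
        · rw [hSeq]; simp
        · intro x hx
          rw [hSeq] at hx
          simp only [Finset.mem_insert, Finset.mem_singleton] at hx
          rcases hx with rfl | rfl <;> omega
      refine ⟨?_, ?_, ?_⟩
      · rw [hmin, show k-2+1 = k-1 by ring]; exact hk1
      · rw [hmin, show k-2+2 = k by ring]
        intro hk
        have := hb k hk; omega
      · rw [hmin]; omega
    · -- recurse
      have hS'ne : S'.Nonempty := by
        by_contra hc
        rw [Finset.not_nonempty_iff_eq_empty] at hc
        rw [hc, vS_empty] at hvS'
        exact absurd hvS'.symm (ne_of_gt (zpow_pos' (k-2)))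
      have hb' : ∀ i ∈ S', i ≤ k - 3 := by
        intro i hi
        have h1 := hb i (Finset.mem_of_mem_erase hi)
        have h2 : i ≠ k - 1 := (Finset.mem_erase.mp hi).1
        have h3 : i ≠ k - 2 := fun h => hk2 (h ▸ hi)
        omega
      have hb'' : ∀ i ∈ S', i ≤ (k-2) - 1 := by intro i hi; have := hb' i hi; omega
      obtain ⟨hm1, hm2, hm3⟩ := IH S' hS'sub hS'ne (k-2) hb'' hvS'
      set m := S'.min' hS'ne with hm
      have hmle : m ≤ k - 3 := hb' m (S'.min'_mem hS'ne)
      have hminS : S.min' hS = m := by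
        apply min'_eq
        · exact Finset.mem_of_mem_erase (S'.min'_mem hS'ne)
        · intro x hx
          by_cases h1 : x = k - 1
          · omega
          · exact Finset.min'_le S' x (Finset.mem_erase.mpr ⟨h1, hx⟩)
      refine ⟨?_, ?_, ?_⟩
      · rw [hminS]; exact Finset.mem_of_mem_erase hm1
      · rw [hminS]
        intro hc
        apply hm2
        apply Finset.mem_erase.mpr
        exact ⟨by omega, hc⟩
      · rw [hminS]; omega

/-- Classification of representations of a pure power φ^k. -/
lemma single_classify {W : Finset ℤ} {k : ℤ} (hv : vS W = φ ^ k) :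
    W = {k} ∨ W = {k-2, k-1} ∨
      ∃ hW : W.Nonempty, W.min' hW + 1 ∈ W ∧ W.min' hW + 2 ∉ W ∧ W.min' hW + 2 < k := by
  have hWne : W.Nonempty := by
    by_contra hc
    rw [Finset.not_nonempty_iff_eq_empty] at hc
    rw [hc, vS_empty] at hv
    exact absurd hv.symm (ne_of_gt (zpow_pos' k))
  have hble : ∀ i ∈ W, i ≤ k := fun i hi => mem_le_of_vS_eq hv hi
  by_cases hk : k ∈ W
  · left
    have hvz : vS (W.erase k) = 0 := by rw [vS_erase hk, hv]; ring
    have := vS_eq_zero hvz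
    ext x
    simp only [Finset.mem_singleton]
    constructor
    · intro hx
      by_contra h1
      have : x ∈ W.erase k := Finset.mem_erase.mpr ⟨h1, hx⟩
      rw [vS_eq_zero hvz] at this
      exact absurd this (Finset.notMem_empty x)
    · rintro rfl; exact hk
  · have hb : ∀ i ∈ W, i ≤ k - 1 := by
      intro i hi
      have h1 := hble i hi
      have : i ≠ k := fun h => hk (h ▸ hi)
      omega
    obtain ⟨hm1, hm2, hm3⟩ := BOT W hWne k hb hv
    set m := W.min' hWne with hmdef
    rcases lt_or_eq_of_le hm3 with hlt | heq
    · right; right; exact ⟨hWne, hm1, hm2, hlt⟩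
    · right; left
      -- m + 2 = k, so W = {m, m+1} = {k-2, k-1}
      have hmW : m ∈ W := W.min'_mem hWne
      have hmne : m + 1 ≠ m := by omega
      have h1 : m + 1 ∈ W.erase m := Finset.mem_erase.mpr ⟨hmne, hm1⟩
      have hv1 : vS (W.erase m) = φ ^ k - φ ^ m := by rw [vS_erase hmW, hv]
      have hv2 : vS ((W.erase m).erase (m+1)) = 0 := by
        rw [vS_erase h1, hv1]
        have := zpow_rec m
        rw [show m + 2 = k from heq] at this
        linarith
      have hempty := vS_eq_zero hv2
      ext x
      simp only [Finset.mem_insert, Finset.mem_singleton]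
      constructor
      · intro hx
        by_cases ha : x = m
        · left; omega
        · by_cases hb2 : x = m + 1
          · right; omega
          · exfalso
            have : x ∈ (W.erase m).erase (m+1) :=
              Finset.mem_erase.mpr ⟨hb2, Finset.mem_erase.mpr ⟨ha, hx⟩⟩
            rw [hempty] at this
            exact absurd this (Finset.notMem_empty x)
      · rintro (rfl | rfl)
        · rw [show k - 2 = m by omega]; exact hmW
        · rw [show k - 1 = m + 1 by omega]; exact hm1

/-- Knott condition for Finsets. -/
def KF (S : Finset ℤ) : Prop :=
  ∀ m : ℤ, S.min = (m : WithTop ℤ) → ¬((m+1) ∈ S ∧ (m+2) ∉ S)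

lemma KF_empty : KF ∅ := by
  intro m hm
  simp at hm

lemma KF_iff {S : Finset ℤ} (hS : S.Nonempty) :
    KF S ↔ ¬(S.min' hS + 1 ∈ S ∧ S.min' hS + 2 ∉ S) := by
  have hcoe : ((S.min' hS : ℤ) : WithTop ℤ) = S.min := Finset.coe_min' hS
  constructor
  · intro h
    exact h _ hcoe.symm
  · intro h m hm
    have : ((m : ℤ) : WithTop ℤ) = ((S.min' hS : ℤ) : WithTop ℤ) := by rw [hcoe, hm]
    have hmeq : m = S.min' hS := by exact_mod_cast this
    rw [hmeq]
    exact h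

lemma KF_vio {S : Finset ℤ} (hKF : KF S) (hS : S.Nonempty)
    (h1 : S.min' hS + 1 ∈ S) (h2 : S.min' hS + 2 ∉ S) : False :=
  ((KF_iff hS).mp hKF) ⟨h1, h2⟩

lemma min'_insert_top {a : ℤ} {S : Finset ℤ} (hS : S.Nonempty) (ha : S.min' hS < a) :
    (insert a S).min' (hS.mono (Finset.subset_insert a S)) = S.min' hS := by
  apply min'_eq
  · exact Finset.mem_insert_of_mem (S.min'_mem hS)
  · intro x hx
    rcases Finset.mem_insert.mp hx with rfl | hx'
    · omega
    · exact Finset.min'_le S x hx'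

lemma KF_insert_top {a : ℤ} {S : Finset ℤ} (hS : S.Nonempty) (ha : S.min' hS + 2 < a) :
    KF (insert a S) ↔ KF S := by
  have hne : (insert a S).Nonempty := hS.mono (Finset.subset_insert a S)
  have hmin := min'_insert_top hS (by omega : S.min' hS < a)
  rw [KF_iff hne, KF_iff hS, hmin]
  have e1 : S.min' hS + 1 ∈ insert a S ↔ S.min' hS + 1 ∈ S := by
    simp only [Finset.mem_insert]
    constructor
    · rintro (h | h); · omega
      · exact h
    · intro h; right; exact h
  have e2 : S.min' hS + 2 ∈ insert a S ↔ S.min' hS + 2 ∈ S := by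
    simp only [Finset.mem_insert]
    constructor
    · rintro (h | h); · omega
      · exact h
    · intro h; right; exact h
  rw [e1]
  constructor
  · intro h hc
    exact h ⟨hc.1, fun hm => hc.2 (e2.mp hm)⟩
  · intro h hc
    exact h ⟨hc.1, fun hm => hc.2 (e2.mpr hm)⟩


lemma npow_rec' (k : ℕ) : φ ^ (k+2) = φ ^ (k+1) + φ ^ k := by
  rw [pow_add, phi_sq, pow_succ]; ring

lemma phi_pow_fib (n : ℕ) : φ ^ (n+1) = (Nat.fib (n+1) : ℝ) * φ + (Nat.fib n : ℝ) := by
  induction n with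
  | zero => simp
  | succ m ih =>
    rw [pow_succ, ih, Nat.fib_add_two]
    push_cast
    linear_combination (Nat.fib (m+1) : ℝ) * phi_sq

lemma fib_lt_phi_pow : ∀ n : ℕ, (Nat.fib (n+2) : ℝ) < φ ^ (n+1) := by
  intro n
  induction n using Nat.strong_induction_on with
  | _ n IH =>
    match n with
    | 0 => simpa using one_lt_phi
    | 1 =>
      have : φ ^ 2 = φ + 1 := phi_sq
      rw [this]
      have := one_lt_phi
      norm_num [Nat.fib]
      linarith
    | (m+2) =>
      have h1 := IH m (by omega)
      have h2 := IH (m+1) (by omega)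
      have h3 : Nat.fib (m+4) = Nat.fib (m+2) + Nat.fib (m+3) := Nat.fib_add_two
      have h4 := npow_rec' (m+1)
      push_cast [h3]
      rw [show m+2+1 = m+1+2 by ring, h4]
      push_cast at h1 h2
      linarith

lemma phi_pow_le_fib : ∀ n : ℕ, φ ^ n ≤ (Nat.fib (n+2) : ℝ) := by
  intro n
  induction n using Nat.strong_induction_on with
  | _ n IH =>
    match n with
    | 0 => simp
    | 1 => simpa [show Nat.fib 3 = 2 by decide] using le_of_lt phi_lt_two
    | (m+2) =>
      have h1 := IH m (by omega)
      have h2 := IH (m+1) (by omega)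
      have h3 : Nat.fib (m+4) = Nat.fib (m+2) + Nat.fib (m+3) := Nat.fib_add_two
      have h4 := npow_rec' m
      push_cast [h3]
      rw [h4]
      push_cast at h1 h2
      linarith

lemma phi_pow_lt_fib : ∀ n : ℕ, 1 ≤ n → φ ^ n < (Nat.fib (n+2) : ℝ) := by
  intro n hn
  induction n using Nat.strong_induction_on with
  | _ n IH =>
    match n with
    | 1 => simpa [show Nat.fib 3 = 2 by decide] using phi_lt_two
    | 2 =>
      rw [phi_sq]
      have := phi_lt_two
      norm_num [Nat.fib]
      linarith
    | (m+3) =>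
      have h1 := IH (m+1) (by omega) (by omega)
      have h2 := IH (m+2) (by omega) (by omega)
      have h3 : Nat.fib (m+5) = Nat.fib (m+3) + Nat.fib (m+4) := Nat.fib_add_two
      have h4 := npow_rec' (m+1)
      push_cast [h3]
      rw [show m+3 = m+1+2 by ring, h4]
      push_cast at h1 h2
      linarith

-- key identity: φ^(n+1) + φ^(-2) * fib (n+1) = fib (n+3)
lemma I1 (n : ℕ) : φ ^ ((n:ℤ)+1) + φ ^ (-2:ℤ) * (Nat.fib (n+1) : ℝ) = (Nat.fib (n+3) : ℝ) := by
  rw [show (n:ℤ)+1 = ((n+1 : ℕ) : ℤ) by push_cast; ring, zpow_natCast, phi_pow_fib n,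
    phi_inv_two]
  have h1 : Nat.fib (n+3) = Nat.fib (n+1) + Nat.fib (n+2) := Nat.fib_add_two
  have h2 : Nat.fib (n+2) = Nat.fib n + Nat.fib (n+1) := Nat.fib_add_two
  rw [h1, h2]
  push_cast
  ring

-- shift maps
def embDown : ℤ ↪ ℤ := ⟨fun x => x - 2, sub_left_injective⟩
def embUp : ℤ ↪ ℤ := ⟨fun x => x + 2, add_left_injective 2⟩

def sdown (S : Finset ℤ) : Finset ℤ := S.map embDown
def sup (S : Finset ℤ) : Finset ℤ := S.map embUp

lemma mem_sdown {x : ℤ} {S : Finset ℤ} : x ∈ sdown S ↔ x + 2 ∈ S := by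
  simp only [sdown, Finset.mem_map, embDown, Function.Embedding.coeFn_mk]
  constructor
  · rintro ⟨a, ha, rfl⟩; simpa using ha
  · intro h; exact ⟨x+2, h, by ring⟩

lemma mem_sup {x : ℤ} {S : Finset ℤ} : x ∈ sup S ↔ x - 2 ∈ S := by
  simp only [sup, Finset.mem_map, embUp, Function.Embedding.coeFn_mk]
  constructor
  · rintro ⟨a, ha, rfl⟩; simpa using ha
  · intro h; exact ⟨x-2, h, by ring⟩

lemma sup_sdown (S : Finset ℤ) : sup (sdown S) = S := by
  ext x; rw [mem_sup, mem_sdown]; simp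

lemma sdown_sup (S : Finset ℤ) : sdown (sup S) = S := by
  ext x; rw [mem_sdown, mem_sup]; simp

lemma sdown_inj {S T : Finset ℤ} (h : sdown S = sdown T) : S = T := by
  rw [← sup_sdown S, h, sup_sdown]

lemma vS_sdown (S : Finset ℤ) : vS (sdown S) = φ ^ (-2:ℤ) * vS S := by
  unfold vS sdown
  rw [Finset.sum_map, Finset.mul_sum]
  apply Finset.sum_congr rfl
  intro x _
  simp only [embDown, Function.Embedding.coeFn_mk]
  rw [show x - 2 = -2 + x by ring, zpow_add₀ phi_ne]

lemma vS_sup (S : Finset ℤ) : vS (sup S) = φ ^ (2:ℤ) * vS S := by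
  unfold vS sup
  rw [Finset.sum_map, Finset.mul_sum]
  apply Finset.sum_congr rfl
  intro x _
  simp only [embUp, Function.Embedding.coeFn_mk]
  rw [show x + 2 = 2 + x by ring, zpow_add₀ phi_ne]

lemma sdown_nonempty {S : Finset ℤ} (h : S.Nonempty) : (sdown S).Nonempty := by
  obtain ⟨a, ha⟩ := h
  exact ⟨a - 2, mem_sdown.mpr (by simpa using ha)⟩

lemma min'_sdown {S : Finset ℤ} (hS : S.Nonempty) :
    (sdown S).min' (sdown_nonempty hS) = S.min' hS - 2 := by
  apply min'_eq
  · rw [mem_sdown]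
    simpa using S.min'_mem hS
  · intro x hx
    rw [mem_sdown] at hx
    have := Finset.min'_le S _ hx
    omega

lemma KF_sdown {S : Finset ℤ} : KF (sdown S) ↔ KF S := by
  rcases S.eq_empty_or_nonempty with rfl | hS
  · simp only [sdown, Finset.map_empty]
  · rw [KF_iff (sdown_nonempty hS), KF_iff hS, min'_sdown hS]
    have e1 : S.min' hS - 2 + 1 ∈ sdown S ↔ S.min' hS + 1 ∈ S := by
      rw [mem_sdown, show S.min' hS - 2 + 1 + 2 = S.min' hS + 1 by ring]
    have e2 : S.min' hS - 2 + 2 ∈ sdown S ↔ S.min' hS + 2 ∈ S := by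
      rw [mem_sdown, show S.min' hS - 2 + 2 + 2 = S.min' hS + 2 by ring]
    rw [e1]
    constructor
    · intro h hc
      exact h ⟨hc.1, fun hm => hc.2 (e2.mp hm)⟩
    · intro h hc
      exact h ⟨hc.1, fun hm => hc.2 (e2.mpr hm)⟩

/-- The set of Knott representations of `N` as Finsets. -/
def RN (N : ℕ) : Set (Finset ℤ) := {S | vS S = (N:ℝ) ∧ KF S}

lemma RN_nonempty_mem {N : ℕ} (hN : 1 ≤ N) {S : Finset ℤ} (hS : S ∈ RN N) : S.Nonempty := by
  by_contra hc
  rw [Finset.not_nonempty_iff_eq_empty] at hc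
  have := hS.1
  rw [hc, vS_empty] at this
  have : (N:ℝ) = 0 := this.symm
  exact_mod_cast absurd this (by positivity)

lemma max_le_RN {n : ℕ} (hn : 2 ≤ n) {S : Finset ℤ} (hv : vS S = (Nat.fib n : ℝ)) :
    ∀ i ∈ S, i ≤ (n:ℤ) - 2 := by
  intro i hi
  by_contra hc
  push_neg at hc
  have h1 : ((n:ℤ) - 1) ≤ i := by omega
  have h2 : φ ^ ((n:ℤ) - 1) ≤ vS S := le_trans (zpow_le_zpow h1) (mem_le_vS hi)
  have h3 : φ ^ ((n:ℤ) - 1) = φ ^ (n - 1 : ℕ) := by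
    rw [← zpow_natCast]
    congr 1
    omega
  have h4 := fib_lt_phi_pow (n - 2)
  rw [show n - 2 + 2 = n by omega, show n - 2 + 1 = n - 1 by omega] at h4
  rw [hv, h3] at h2
  linarith

lemma exists_ge_RN {n : ℕ} (hn : 2 ≤ n) {S : Finset ℤ} (hv : vS S = (Nat.fib n : ℝ)) :
    ∃ i ∈ S, (n:ℤ) - 3 ≤ i := by
  by_contra hc
  push_neg at hc
  have hb : ∀ i ∈ S, i ≤ (n:ℤ) - 4 := by
    intro i hi
    have := hc i hi
    omega
  have h1 := vS_lt_of_le hb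
  rw [show (n:ℤ) - 4 + 2 = (n:ℤ) - 2 by ring] at h1
  have h2 : φ ^ ((n:ℤ) - 2) = φ ^ (n - 2 : ℕ) := by
    rw [← zpow_natCast]
    congr 1
    omega
  have h3 := phi_pow_le_fib (n - 2)
  rw [show n - 2 + 2 = n by omega] at h3
  rw [hv, h2] at h1
  linarith


lemma I1' (n : ℕ) (hn : 1 ≤ n) :
    φ ^ (n:ℤ) + φ ^ (-2:ℤ) * (Nat.fib n : ℝ) = (Nat.fib (n+2) : ℝ) := by
  have := I1 (n-1)
  rw [show (n-1:ℕ)+1 = n by omega, show (n-1:ℕ)+3 = n+2 by omega,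
    show ((n-1:ℕ):ℤ)+1 = (n:ℤ) by omega] at this
  exact this

lemma zsplit (i : ℤ) : φ ^ i = φ ^ (i-1) + φ ^ (i-2) := by
  have := zpow_rec (i-2)
  rw [show i-2+2 = i by ring, show i-2+1 = i-1 by ring] at this
  exact this

lemma fibR_pos {n : ℕ} (hn : 1 ≤ n) : (0:ℝ) < (Nat.fib n : ℝ) := by
  have := Nat.fib_pos.mpr (by omega : 0 < n)
  exact_mod_cast this

lemma zpow_cast' (a : ℤ) (b : ℕ) (h : a = (b:ℤ)) : φ ^ a = φ ^ b := by
  rw [← zpow_natCast]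
  congr 1

-- φ^(-2) * fib n < φ^(n-3)
lemma bound_up {n : ℕ} (hn : 2 ≤ n) : φ ^ (-2:ℤ) * (Nat.fib n : ℝ) < φ ^ ((n:ℤ)-3) := by
  have h1 := fib_lt_phi_pow (n-2)
  rw [show n-2+2 = n by omega, show n-2+1 = n-1 by omega] at h1
  have h2 : φ ^ (-2:ℤ) * φ ^ ((n:ℤ)-1) = φ ^ ((n:ℤ)-3) := by
    rw [← zpow_add₀ phi_ne]; ring_nf
  rw [← h2]
  have h3 : φ ^ ((n:ℤ)-1) = φ ^ (n-1:ℕ) := zpow_cast' _ _ (by omega)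
  rw [h3]
  have := zpow_pos' (-2:ℤ)
  exact (mul_lt_mul_iff_right₀ this).mpr h1

-- φ^(n-4) < φ^(-2) * fib n for n ≥ 3
lemma bound_lo {n : ℕ} (hn : 3 ≤ n) : φ ^ ((n:ℤ)-4) < φ ^ (-2:ℤ) * (Nat.fib n : ℝ) := by
  have h1 := phi_pow_lt_fib (n-2) (by omega)
  rw [show n-2+2 = n by omega] at h1
  have h2 : φ ^ (-2:ℤ) * φ ^ ((n:ℤ)-2) = φ ^ ((n:ℤ)-4) := by
    rw [← zpow_add₀ phi_ne]; ring_nf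
  rw [← h2]
  have h3 : φ ^ ((n:ℤ)-2) = φ ^ (n-2:ℕ) := zpow_cast' _ _ (by omega)
  rw [h3]
  have := zpow_pos' (-2:ℤ)
  exact (mul_lt_mul_iff_right₀ this).mpr h1

lemma bound_pos {n : ℕ} (hn : 1 ≤ n) : (0:ℝ) < φ ^ (-2:ℤ) * (Nat.fib n : ℝ) :=
  mul_pos (zpow_pos' _) (fibR_pos hn)

lemma phin_lt_fib {n : ℕ} (hn : 3 ≤ n) : φ ^ ((n:ℤ)-2) < (Nat.fib n : ℝ) := by
  have h1 := phi_pow_lt_fib (n-2) (by omega)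
  rw [show n-2+2 = n by omega] at h1
  rw [zpow_cast' ((n:ℤ)-2) (n-2) (by omega)]
  exact h1

lemma fib_lt_phin {n : ℕ} (hn : 2 ≤ n) : (Nat.fib n : ℝ) < φ ^ ((n:ℤ)-1) := by
  have h1 := fib_lt_phi_pow (n-2)
  rw [show n-2+2 = n by omega, show n-2+1 = n-1 by omega] at h1
  rw [zpow_cast' ((n:ℤ)-1) (n-1) (by omega)]
  exact h1

-- facts about members of RN (fib n)
lemma RN_facts {n : ℕ} (hn : 3 ≤ n) {T : Finset ℤ} (hT : T ∈ RN (Nat.fib n)) :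
    ∃ hTne : T.Nonempty, (∀ i ∈ T, i ≤ (n:ℤ)-2) ∧ T.min' hTne ≤ (n:ℤ)-3 := by
  have hv := hT.1
  have hTne : T.Nonempty := RN_nonempty_mem (Nat.fib_pos.mpr (by omega)) hT
  have hle : ∀ i ∈ T, i ≤ (n:ℤ)-2 := max_le_RN (by omega) hv
  refine ⟨hTne, hle, ?_⟩
  by_contra hc
  push_neg at hc
  have hmin : T.min' hTne = (n:ℤ)-2 := by
    have := hle _ (T.min'_mem hTne); omega
  have hsingle : T = {(n:ℤ)-2} := by
    apply Finset.eq_singleton_iff_unique_mem.mpr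
    constructor
    · rw [← hmin]; exact T.min'_mem hTne
    · intro x hx
      have h1 := Finset.min'_le T x hx
      have h2 := hle x hx
      omega
  rw [hsingle] at hv
  unfold vS at hv
  rw [Finset.sum_singleton] at hv
  have := phin_lt_fib hn
  linarith

-- min' bound for sets of value φ^(-2)*fib n
lemma min_le_aux {n : ℕ} (hn : 3 ≤ n) {E : Finset ℤ} {c : ℤ}
    (hE : vS E = φ ^ (-2:ℤ) * (Nat.fib n : ℝ)) (hb : ∀ i ∈ E, i ≤ (n:ℤ)-3)
    (hc1 : c = (n:ℤ)-3 ∨ c = (n:ℤ)-5) (hb' : ∀ i ∈ E, i ≤ c) :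
    ∃ hEne : E.Nonempty, E.min' hEne ≤ c - 2 := by
  have hEne : E.Nonempty := by
    by_contra h
    rw [Finset.not_nonempty_iff_eq_empty] at h
    rw [h, vS_empty] at hE
    exact absurd hE.symm (ne_of_gt (bound_pos (by omega)))
  refine ⟨hEne, ?_⟩
  by_contra hcon
  push_neg at hcon
  -- all elements are in [c-1, c]
  have hrange : ∀ i ∈ E, c - 1 ≤ i ∧ i ≤ c := by
    intro i hi
    exact ⟨le_trans (by omega) (Finset.min'_le E i hi), hb' i hi⟩
  rcases hc1 with rfl | rfl
  · -- c = n-3 : if n-3 ∈ E then φ^(n-3) ≤ vS < φ^(n-3); else E = {n-4}, φ^(n-4) < vS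
    by_cases hm : (n:ℤ)-3 ∈ E
    · have := mem_le_vS hm
      rw [hE] at this
      linarith [bound_up (by omega : 2 ≤ n)]
    · have hsingle : E = {(n:ℤ)-4} := by
        apply Finset.eq_singleton_iff_unique_mem.mpr
        constructor
        · obtain ⟨a, ha⟩ := hEne
          have h1 := hrange a ha
          have h2 : a ≠ (n:ℤ)-3 := fun h => hm (h ▸ ha)
          have : a = (n:ℤ)-4 := by omega
          rwa [this] at ha
        · intro x hx
          have h1 := hrange x hx
          have h2 : x ≠ (n:ℤ)-3 := fun h => hm (h ▸ hx)
          omega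
      rw [hsingle] at hE
      unfold vS at hE
      rw [Finset.sum_singleton] at hE
      linarith [bound_lo hn]
  · -- c = n-5 : vS E ≤ φ^(n-6)+φ^(n-5) = φ^(n-4) < φ^(-2)*fib n
    have hsub : E ⊆ {(n:ℤ)-6, (n:ℤ)-5} := by
      intro x hx
      have := hrange x hx
      simp only [Finset.mem_insert, Finset.mem_singleton]
      omega
    have hle2 : vS E ≤ vS {(n:ℤ)-6, (n:ℤ)-5} :=
      Finset.sum_le_sum_of_subset_of_nonneg hsub (fun i _ _ => le_of_lt (zpow_pos' i))
    have hv2 : vS {(n:ℤ)-6, (n:ℤ)-5} = φ ^ ((n:ℤ)-4) := by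
      unfold vS
      rw [Finset.sum_insert (by simp only [Finset.mem_singleton]; omega), Finset.sum_singleton]
      have := zsplit ((n:ℤ)-4)
      rw [show (n:ℤ)-4-1 = (n:ℤ)-5 by ring, show (n:ℤ)-4-2 = (n:ℤ)-6 by ring] at this
      linarith
    rw [hE, hv2] at hle2
    linarith [bound_lo hn]


lemma KF_insert_two {a b : ℤ} {E : Finset ℤ} (hE : E.Nonempty) (hab : b < a)
    (hb : E.min' hE + 2 < b) : KF (insert a (insert b E)) ↔ KF E := by
  have h1 : (insert b E).Nonempty := hE.mono (Finset.subset_insert b E)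
  have hmin : (insert b E).min' h1 = E.min' hE := min'_insert_top hE (by omega)
  have step1 : KF (insert a (insert b E)) ↔ KF (insert b E) :=
    KF_insert_top h1 (by rw [hmin]; omega)
  rw [step1]
  exact KF_insert_top hE hb

lemma KF_insert_three {a b c : ℤ} {E : Finset ℤ} (hE : E.Nonempty) (hbc : c < b) (hab : b < a)
    (hc : E.min' hE + 2 < c) : KF (insert a (insert b (insert c E))) ↔ KF E := by
  have h1 : (insert c E).Nonempty := hE.mono (Finset.subset_insert c E)
  have hmin : (insert c E).min' h1 = E.min' hE := min'_insert_top hE (by omega)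
  have step1 : KF (insert a (insert b (insert c E))) ↔ KF (insert c E) :=
    KF_insert_two h1 hab (by rw [hmin]; omega)
  rw [step1]
  exact KF_insert_top hE hc

-- sdown of an RN element
lemma sdown_facts {n : ℕ} (hn : 3 ≤ n) {T : Finset ℤ} (hT : T ∈ RN (Nat.fib n)) :
    ∃ hne : (sdown T).Nonempty,
      vS (sdown T) = φ ^ (-2:ℤ) * (Nat.fib n : ℝ) ∧ (∀ i ∈ sdown T, i ≤ (n:ℤ)-4) ∧
      (sdown T).min' hne ≤ (n:ℤ)-5 ∧ KF (sdown T) := by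
  obtain ⟨hTne, hTle, hTmin⟩ := RN_facts hn hT
  refine ⟨sdown_nonempty hTne, ?_, ?_, ?_, ?_⟩
  · rw [vS_sdown, hT.1]
  · intro i hi
    have := hTle _ (mem_sdown.mp hi)
    omega
  · rw [min'_sdown hTne]
    omega
  · exact KF_sdown.mpr hT.2

lemma vS_eq_fib_succ {n : ℕ} (hn : 1 ≤ n) {X : Finset ℤ} (hX : X ∈ RN (Nat.fib (n+2))) :
    vS X = φ ^ (n:ℤ) + φ ^ (-2:ℤ) * (Nat.fib n : ℝ) := by
  rw [hX.1, ← I1' n hn]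

/-- Case A: representations of fib (n+2) containing the top index n. -/
lemma caseA {n : ℕ} (hn : 3 ≤ n) :
    {S | S ∈ RN (Nat.fib (n+2)) ∧ (n:ℤ) ∈ S} =
      (fun T => insert (n:ℤ) (sdown T)) '' RN (Nat.fib n) := by
  ext S
  simp only [Set.mem_setOf_eq, Set.mem_image]
  constructor
  · rintro ⟨hS, hk⟩
    set E := S.erase (n:ℤ) with hEdef
    have hvE : vS E = φ ^ (-2:ℤ) * (Nat.fib n : ℝ) := by
      rw [hEdef, vS_erase hk, vS_eq_fib_succ (by omega) hS]
      ring
    have hbE : ∀ i ∈ E, i ≤ (n:ℤ)-3 := by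
      intro i hi
      by_contra hc
      push_neg at hc
      have h1 : φ ^ ((n:ℤ)-2) ≤ φ ^ i := zpow_le_zpow (by omega)
      have h2 := mem_le_vS hi
      rw [hvE] at h2
      have h3 := bound_up (by omega : 2 ≤ n)
      have h4 : φ ^ ((n:ℤ)-3) < φ ^ ((n:ℤ)-2) := zpow_lt_zpow (by omega)
      linarith
    obtain ⟨hEne, hEmin⟩ := min_le_aux hn hvE hbE (Or.inl rfl) hbE
    have hSrw : S = insert (n:ℤ) E := (Finset.insert_erase hk).symm
    have hKFE : KF E := by
      have hKFS : KF (insert (n:ℤ) E) := by rw [← hSrw]; exact hS.2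
      exact (KF_insert_top hEne (by omega)).mp hKFS
    refine ⟨sup E, ⟨?_, ?_⟩, ?_⟩
    · rw [vS_sup, hvE, ← mul_assoc, ← zpow_add₀ phi_ne]
      norm_num
    · rw [← sdown_sup E] at hKFE
      exact KF_sdown.mp hKFE
    · rw [sdown_sup E, ← hSrw]
  · rintro ⟨T, hT, rfl⟩
    obtain ⟨hne, hv, hle, hmin, hKF⟩ := sdown_facts hn hT
    have hnotmem : (n:ℤ) ∉ sdown T := by
      intro h
      have := hle _ h; omega
    refine ⟨⟨?_, ?_⟩, Finset.mem_insert_self _ _⟩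
    · rw [vS_insert hnotmem, hv, I1' n (by omega)]
    · exact (KF_insert_top hne (by omega)).mpr hKF


lemma top_mem {n : ℕ} (hn : 3 ≤ n) {S : Finset ℤ} (hS : S ∈ RN (Nat.fib (n+2)))
    (hk : (n:ℤ) ∉ S) : (n:ℤ)-1 ∈ S ∧ ∀ i ∈ S, i ≤ (n:ℤ)-1 := by
  have hle : ∀ i ∈ S, i ≤ (n:ℤ) := by
    intro i hi
    have := max_le_RN (n := n+2) (by omega) hS.1 i hi
    push_cast at this
    omega
  have hle1 : ∀ i ∈ S, i ≤ (n:ℤ)-1 := by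
    intro i hi
    have h1 := hle i hi
    have : i ≠ (n:ℤ) := fun h => hk (h ▸ hi)
    omega
  obtain ⟨i, hi, hgei⟩ := exists_ge_RN (n := n+2) (by omega) hS.1
  have : i = (n:ℤ)-1 := by
    have h1 := hle1 i hi
    push_cast at hgei
    omega
  exact ⟨this ▸ hi, hle1⟩

/-- Case B2: n ∉ S but n-2 ∈ S. -/
lemma caseB2 {n : ℕ} (hn : 3 ≤ n) :
    {S | S ∈ RN (Nat.fib (n+2)) ∧ (n:ℤ) ∉ S ∧ (n:ℤ)-2 ∈ S} =
      (fun T => insert ((n:ℤ)-1) (insert ((n:ℤ)-2) (sdown T))) '' RN (Nat.fib n) := by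
  ext S
  simp only [Set.mem_setOf_eq, Set.mem_image]
  constructor
  · rintro ⟨hS, hk, hk2⟩
    obtain ⟨hk1, hle1⟩ := top_mem hn hS hk
    have hk2' : (n:ℤ)-2 ∈ S.erase ((n:ℤ)-1) := Finset.mem_erase.mpr ⟨by omega, hk2⟩
    set E := (S.erase ((n:ℤ)-1)).erase ((n:ℤ)-2) with hEdef
    have hvE : vS E = φ ^ (-2:ℤ) * (Nat.fib n : ℝ) := by
      rw [hEdef, vS_erase hk2', vS_erase hk1, vS_eq_fib_succ (by omega) hS]
      have := zsplit (n:ℤ)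
      linarith
    have hbE : ∀ i ∈ E, i ≤ (n:ℤ)-3 := by
      intro i hi
      have h1 : i ∈ S := Finset.mem_of_mem_erase (Finset.mem_of_mem_erase hi)
      have h2 := hle1 i h1
      have h3 : i ≠ (n:ℤ)-1 := (Finset.mem_erase.mp (Finset.mem_of_mem_erase hi)).1
      have h4 : i ≠ (n:ℤ)-2 := (Finset.mem_erase.mp hi).1
      omega
    obtain ⟨hEne, hEmin⟩ := min_le_aux hn hvE hbE (Or.inl rfl) hbE
    have hSrw : S = insert ((n:ℤ)-1) (insert ((n:ℤ)-2) E) := by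
      rw [hEdef, Finset.insert_erase hk2', Finset.insert_erase hk1]
    have hKFE : KF E := by
      have hKFS : KF (insert ((n:ℤ)-1) (insert ((n:ℤ)-2) E)) := by rw [← hSrw]; exact hS.2
      exact (KF_insert_two hEne (by omega) (by omega)).mp hKFS
    refine ⟨sup E, ⟨?_, ?_⟩, ?_⟩
    · rw [vS_sup, hvE, ← mul_assoc, ← zpow_add₀ phi_ne]
      norm_num
    · have : KF (sdown (sup E)) ↔ KF (sup E) := KF_sdown
      rw [sdown_sup E] at this
      exact this.mp hKFE
    · rw [sdown_sup E, ← hSrw]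
  · rintro ⟨T, hT, rfl⟩
    obtain ⟨hne, hv, hle, hmin, hKF⟩ := sdown_facts hn hT
    have hm2 : (n:ℤ)-2 ∉ sdown T := fun h => by have := hle _ h; omega
    have hm1 : (n:ℤ)-1 ∉ insert ((n:ℤ)-2) (sdown T) := by
      simp only [Finset.mem_insert]
      rintro (h | h)
      · omega
      · have := hle _ h; omega
    refine ⟨⟨?_, ?_⟩, ?_, ?_⟩
    · rw [vS_insert hm1, vS_insert hm2, hv, ← I1' n (by omega)]
      have := zsplit (n:ℤ)
      linarith
    · exact (KF_insert_two hne (by omega) (by omega)).mpr hKF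
    · simp only [Finset.mem_insert]
      push_neg
      refine ⟨by omega, by omega, fun h => by have := hle _ h; omega⟩
    · simp only [Finset.mem_insert]
      tauto

/-- Case B3: n ∉ S and n-2 ∉ S. -/
lemma caseB3 {n : ℕ} (hn : 3 ≤ n) :
    {S | S ∈ RN (Nat.fib (n+2)) ∧ (n:ℤ) ∉ S ∧ (n:ℤ)-2 ∉ S} =
      (fun T => insert ((n:ℤ)-1) (insert ((n:ℤ)-3) (insert ((n:ℤ)-4) (sdown T)))) ''
        {T | T ∈ RN (Nat.fib n) ∧ ∀ i ∈ T, i ≤ (n:ℤ)-3} := by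
  ext S
  simp only [Set.mem_setOf_eq, Set.mem_image]
  constructor
  · rintro ⟨hS, hk, hk2⟩
    obtain ⟨hk1, hle1⟩ := top_mem hn hS hk
    set E1 := S.erase ((n:ℤ)-1) with hE1def
    have hvE1 : vS E1 = φ ^ ((n:ℤ)-2) + φ ^ (-2:ℤ) * (Nat.fib n : ℝ) := by
      rw [hE1def, vS_erase hk1, vS_eq_fib_succ (by omega) hS]
      have := zsplit (n:ℤ)
      linarith
    have hbE1 : ∀ i ∈ E1, i ≤ (n:ℤ)-3 := by
      intro i hi
      have h1 : i ∈ S := Finset.mem_of_mem_erase hi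
      have h2 := hle1 i h1
      have h3 : i ≠ (n:ℤ)-1 := (Finset.mem_erase.mp hi).1
      have h4 : i ≠ (n:ℤ)-2 := fun h => hk2 (h ▸ h1)
      omega
    have hk3 : (n:ℤ)-3 ∈ E1 := by
      apply forcing hbE1
      rw [show (n:ℤ)-3+1 = (n:ℤ)-2 by ring, hvE1]
      have := bound_pos (n := n) (by omega)
      linarith
    set E2 := E1.erase ((n:ℤ)-3) with hE2def
    have hvE2 : vS E2 = φ ^ ((n:ℤ)-4) + φ ^ (-2:ℤ) * (Nat.fib n : ℝ) := by
      rw [hE2def, vS_erase hk3, hvE1]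
      have := zsplit ((n:ℤ)-2)
      rw [show (n:ℤ)-2-1 = (n:ℤ)-3 by ring, show (n:ℤ)-2-2 = (n:ℤ)-4 by ring] at this
      linarith
    have hbE2 : ∀ i ∈ E2, i ≤ (n:ℤ)-4 := by
      intro i hi
      have h1 := hbE1 i (Finset.mem_of_mem_erase hi)
      have h2 : i ≠ (n:ℤ)-3 := (Finset.mem_erase.mp hi).1
      omega
    have hk4 : (n:ℤ)-4 ∈ E2 := by
      apply forcing hbE2
      rw [show (n:ℤ)-4+1 = (n:ℤ)-3 by ring, hvE2]
      have h1 := bound_lo hn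
      have h2 := zsplit ((n:ℤ)-3)
      rw [show (n:ℤ)-3-1 = (n:ℤ)-4 by ring, show (n:ℤ)-3-2 = (n:ℤ)-5 by ring] at h2
      have h3 : φ ^ ((n:ℤ)-5) < φ ^ ((n:ℤ)-4) := zpow_lt_zpow (by omega)
      linarith
    set E3 := E2.erase ((n:ℤ)-4) with hE3def
    have hvE3 : vS E3 = φ ^ (-2:ℤ) * (Nat.fib n : ℝ) := by
      rw [hE3def, vS_erase hk4, hvE2]
      ring
    have hbE3 : ∀ i ∈ E3, i ≤ (n:ℤ)-5 := by
      intro i hi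
      have h1 := hbE2 i (Finset.mem_of_mem_erase hi)
      have h2 : i ≠ (n:ℤ)-4 := (Finset.mem_erase.mp hi).1
      omega
    obtain ⟨hEne, hEmin⟩ := min_le_aux hn hvE3 (fun i hi => by have := hbE3 i hi; omega)
      (Or.inr rfl) hbE3
    have hSrw : S = insert ((n:ℤ)-1) (insert ((n:ℤ)-3) (insert ((n:ℤ)-4) E3)) := by
      rw [hE3def, Finset.insert_erase hk4, hE2def, Finset.insert_erase hk3, hE1def,
        Finset.insert_erase hk1]
    have hKFE : KF E3 := by
      have hKFS : KF (insert ((n:ℤ)-1) (insert ((n:ℤ)-3) (insert ((n:ℤ)-4) E3))) := by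
        rw [← hSrw]; exact hS.2
      exact (KF_insert_three hEne (by omega) (by omega) (by omega)).mp hKFS
    refine ⟨sup E3, ⟨⟨?_, ?_⟩, ?_⟩, ?_⟩
    · rw [vS_sup, hvE3, ← mul_assoc, ← zpow_add₀ phi_ne]
      norm_num
    · have : KF (sdown (sup E3)) ↔ KF (sup E3) := KF_sdown
      rw [sdown_sup E3] at this
      exact this.mp hKFE
    · intro i hi
      rw [mem_sup] at hi
      have := hbE3 _ hi
      omega
    · rw [sdown_sup E3, ← hSrw]
  · rintro ⟨T, ⟨hT, hT3⟩, rfl⟩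
    obtain ⟨hne, hv, hle, _, hKF⟩ := sdown_facts hn hT
    have hle5 : ∀ i ∈ sdown T, i ≤ (n:ℤ)-5 := by
      intro i hi
      have := hT3 _ (mem_sdown.mp hi)
      omega
    obtain ⟨hne', hmin7⟩ := min_le_aux hn hv (fun i hi => by have := hle5 i hi; omega)
      (Or.inr rfl) hle5
    have hm4 : (n:ℤ)-4 ∉ sdown T := fun h => by have := hle5 _ h; omega
    have hm3 : (n:ℤ)-3 ∉ insert ((n:ℤ)-4) (sdown T) := by
      simp only [Finset.mem_insert]
      rintro (h | h)
      · omega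
      · have := hle5 _ h; omega
    have hm1 : (n:ℤ)-1 ∉ insert ((n:ℤ)-3) (insert ((n:ℤ)-4) (sdown T)) := by
      simp only [Finset.mem_insert]
      rintro (h | h | h)
      · omega
      · omega
      · have := hle5 _ h; omega
    refine ⟨⟨?_, ?_⟩, ?_, ?_⟩
    · rw [vS_insert hm1, vS_insert hm3, vS_insert hm4, hv, ← I1' n (by omega)]
      have h1 := zsplit (n:ℤ)
      have h2 := zsplit ((n:ℤ)-2)
      rw [show (n:ℤ)-2-1 = (n:ℤ)-3 by ring, show (n:ℤ)-2-2 = (n:ℤ)-4 by ring] at h2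
      linarith
    · exact (KF_insert_three hne' (by omega) (by omega) (by omega)).mpr hKF
    · simp only [Finset.mem_insert]
      push_neg
      refine ⟨by omega, by omega, by omega, fun h => by have := hle5 _ h; omega⟩
    · simp only [Finset.mem_insert]
      push_neg
      refine ⟨by omega, by omega, by omega, fun h => by have := hle5 _ h; omega⟩


-- explicit small powers
lemma phi_z0 : φ ^ (0:ℤ) = 1 := zpow_zero φ
lemma phi_z1 : φ ^ (1:ℤ) = φ := zpow_one φ
lemma phi_zm1 : φ ^ (-1:ℤ) = φ - 1 := by
  have h1 : φ ^ (-1:ℤ) * φ ^ (1:ℤ) = 1 := by rw [← zpow_add₀ phi_ne]; norm_num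
  rw [phi_z1] at h1
  have h2 : (φ - 1) * φ = 1 := by nlinarith [phi_sq]
  exact mul_right_cancel₀ phi_ne (h1.trans h2.symm)
lemma phi_zm3 : φ ^ (-3:ℤ) = 2*φ - 3 := by
  have h1 : φ ^ (-3:ℤ) = φ ^ (-1:ℤ) * φ ^ (-2:ℤ) := by rw [← zpow_add₀ phi_ne]; norm_num
  rw [h1, phi_zm1, phi_inv_two]
  nlinarith [phi_sq]
lemma phi_zm4 : φ ^ (-4:ℤ) = 5 - 3*φ := by
  have h1 : φ ^ (-4:ℤ) = φ ^ (-2:ℤ) * φ ^ (-2:ℤ) := by rw [← zpow_add₀ phi_ne]; norm_num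
  rw [h1, phi_inv_two]
  nlinarith [phi_sq]

lemma KF_vio' {S : Finset ℤ} (hKF : KF S) {m : ℤ} (hm : m ∈ S) (hall : ∀ x ∈ S, m ≤ x)
    (h1 : m+1 ∈ S) (h2 : m+2 ∉ S) : False := by
  have hSne : S.Nonempty := ⟨m, hm⟩
  have heq := min'_eq hSne hm hall
  exact KF_vio hKF hSne (by rw [heq]; exact h1) (by rw [heq]; exact h2)

lemma KF_explicit {S : Finset ℤ} {m : ℤ} (hm : m ∈ S) (hall : ∀ x ∈ S, m ≤ x)
    (h : (m+1) ∉ S ∨ (m+2) ∈ S) : KF S := by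
  have hSne : S.Nonempty := ⟨m, hm⟩
  rw [KF_iff hSne, min'_eq hSne hm hall]
  rcases h with h | h
  · intro hc; exact h hc.1
  · intro hc; exact hc.2 h

lemma RN_one : RN 1 = {({0} : Finset ℤ)} := by
  ext S
  simp only [RN, Set.mem_setOf_eq, Set.mem_singleton_iff]
  constructor
  · rintro ⟨hv, hKF⟩
    have hv' : vS S = φ ^ (0:ℤ) := by rw [phi_z0, hv]; norm_num
    rcases single_classify hv' with h | h | ⟨hne, h1, h2, h3⟩
    · exact h
    · exfalso
      rw [show (0:ℤ)-2 = -2 by ring, show (0:ℤ)-1 = -1 by ring] at h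
      subst h
      exact KF_vio' hKF (show (-2:ℤ) ∈ _ by decide)
        (by decide) (show (-2:ℤ)+1 ∈ _ by decide) (by decide)
    · exact absurd ⟨h1, h2⟩ ((KF_iff hne).mp hKF)
  · rintro rfl
    constructor
    · unfold vS
      rw [Finset.sum_singleton, phi_z0]
      norm_num
    · apply KF_explicit (m := 0) (by decide) (by decide)
      left; decide


lemma cast_two : ((2:ℕ):ℝ) = 2 := by norm_num
lemma cast_three : ((3:ℕ):ℝ) = 3 := by norm_num

lemma RN_two : RN 2 = {({-2, 1} : Finset ℤ), ({-2,-1,0} : Finset ℤ)} := by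
  ext S
  simp only [RN, Set.mem_setOf_eq, Set.mem_insert_iff, Set.mem_singleton_iff]
  constructor
  · rintro ⟨hv, hKF⟩
    rw [cast_two] at hv
    have hble : ∀ i ∈ S, i ≤ 1 := by
      intro i hi
      by_contra hc
      push_neg at hc
      have h1 : φ ^ (2:ℤ) ≤ φ ^ i := zpow_le_zpow (by omega)
      have h2 := mem_le_vS hi
      rw [zpow_two'] at h1
      have := one_lt_phi
      linarith
    by_cases h1 : (1:ℤ) ∈ S
    · -- S = {1, -2} or contradiction
      set E := S.erase 1 with hEdef
      have hvE : vS E = φ ^ (-2:ℤ) := by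
        rw [hEdef, vS_erase h1, hv, phi_z1, phi_inv_two]
      have hSrw : S = insert 1 E := (Finset.insert_erase h1).symm
      rcases single_classify hvE with h | h | ⟨hne, ha, hb, hc⟩
      · left
        rw [hSrw, h]
        decide
      · exfalso
        rw [show (-2:ℤ)-2 = -4 by ring, show (-2:ℤ)-1 = -3 by ring] at h
        refine KF_vio' hKF (m := -4) (by rw [hSrw, h]; decide) ?_
          (by rw [hSrw, h]; decide) (by rw [hSrw, h]; decide)
        intro x hx
        rw [hSrw, h] at hx
        simp only [Finset.mem_insert, Finset.mem_singleton] at hx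
        omega
      · exfalso
        have hEsub : E ⊆ S := Finset.erase_subset _ _
        apply KF_vio' hKF (m := E.min' hne) (hEsub (E.min'_mem hne))
        · intro x hx
          rw [hSrw, Finset.mem_insert] at hx
          rcases hx with rfl | hx
          · have := mem_le_of_vS_eq hvE (E.min'_mem hne)
            omega
          · exact Finset.min'_le E x hx
        · exact hEsub ha
        · rw [hSrw, Finset.mem_insert]
          push_neg
          exact ⟨by omega, hb⟩
    · -- 1 ∉ S : S = {0, -1, -2} or contradiction
      have hble0 : ∀ i ∈ S, i ≤ 0 := by
        intro i hi
        have := hble i hi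
        have : i ≠ 1 := fun h => h1 (h ▸ hi)
        omega
      have h0 : (0:ℤ) ∈ S := by
        apply forcing hble0
        rw [show (0:ℤ)+1 = 1 by ring, phi_z1, hv]
        linarith [phi_lt_two]
      set E1 := S.erase 0 with hE1def
      have hvE1 : vS E1 = 1 := by
        rw [hE1def, vS_erase h0, hv, phi_z0]; ring
      have hble1 : ∀ i ∈ E1, i ≤ -1 := by
        intro i hi
        have := hble0 i (Finset.mem_of_mem_erase hi)
        have := (Finset.mem_erase.mp hi).1
        omega
      have hm1 : (-1:ℤ) ∈ E1 := by
        apply forcing hble1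
        rw [show (-1:ℤ)+1 = 0 by ring, phi_z0, hvE1]
      set E2 := E1.erase (-1) with hE2def
      have hvE2 : vS E2 = φ ^ (-2:ℤ) := by
        rw [hE2def, vS_erase hm1, hvE1, phi_zm1, phi_inv_two]; ring
      have hSrw : S = insert 0 (insert (-1) E2) := by
        rw [hE2def, Finset.insert_erase hm1, hE1def, Finset.insert_erase h0]
      rcases single_classify hvE2 with h | h | ⟨hne, ha, hb, hc⟩
      · right
        rw [hSrw, h]
        decide
      · exfalso
        rw [show (-2:ℤ)-2 = -4 by ring, show (-2:ℤ)-1 = -3 by ring] at h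
        refine KF_vio' hKF (m := -4) (by rw [hSrw, h]; decide) ?_
          (by rw [hSrw, h]; decide) (by rw [hSrw, h]; decide)
        intro x hx
        rw [hSrw, h] at hx
        simp only [Finset.mem_insert, Finset.mem_singleton] at hx
        omega
      · exfalso
        have hEsub : E2 ⊆ S := by
          rw [hSrw]
          intro x hx
          simp only [Finset.mem_insert]
          tauto
        apply KF_vio' hKF (m := E2.min' hne) (hEsub (E2.min'_mem hne))
        · intro x hx
          rw [hSrw] at hx
          simp only [Finset.mem_insert] at hx
          rcases hx with rfl | rfl | hx
          · have := mem_le_of_vS_eq hvE2 (E2.min'_mem hne)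
            omega
          · have := mem_le_of_vS_eq hvE2 (E2.min'_mem hne)
            omega
          · exact Finset.min'_le E2 x hx
        · exact hEsub ha
        · rw [hSrw]
          simp only [Finset.mem_insert]
          push_neg
          exact ⟨by omega, by omega, hb⟩
  · rintro (rfl | rfl)
    · constructor
      · unfold vS
        rw [show ({-2,1} : Finset ℤ) = insert (-2) {1} from rfl,
          Finset.sum_insert (by decide), Finset.sum_singleton, phi_inv_two, phi_z1, cast_two]
        ring
      · apply KF_explicit (m := -2) (by decide) (by decide)
        left; decide
    · constructor
      · unfold vS
        rw [show ({-2,-1,0} : Finset ℤ) = insert (-2) (insert (-1) {0}) from rfl,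
          Finset.sum_insert (by decide), Finset.sum_insert (by decide), Finset.sum_singleton,
          phi_inv_two, phi_zm1, phi_z0, cast_two]
        ring
      · apply KF_explicit (m := -2) (by decide) (by decide)
        right; decide


lemma phi_z3 : φ ^ (3:ℤ) = 2*φ + 1 := by
  have h1 : φ ^ (3:ℤ) = φ ^ (1:ℤ) * φ ^ (2:ℤ) := by rw [← zpow_add₀ phi_ne]; norm_num
  rw [h1, phi_z1, zpow_two']
  nlinarith [phi_sq]

lemma RN_three :
    RN 3 = {({-2, 2} : Finset ℤ), ({-2,0,1} : Finset ℤ), ({-4,-3,-2,-1,1} : Finset ℤ)} := by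
  ext S
  simp only [RN, Set.mem_setOf_eq, Set.mem_insert_iff, Set.mem_singleton_iff]
  constructor
  · rintro ⟨hv, hKF⟩
    rw [cast_three] at hv
    have hphi := one_lt_phi
    have hphi2 := phi_lt_two
    have hphi53 := phi_lt
    have hble : ∀ i ∈ S, i ≤ 2 := by
      intro i hi
      by_contra hc
      push_neg at hc
      have h1 : φ ^ (3:ℤ) ≤ φ ^ i := zpow_le_zpow (by omega)
      have h2 := mem_le_vS hi
      rw [phi_z3] at h1
      linarith
    by_cases h2m : (2:ℤ) ∈ S
    · set E := S.erase 2 with hEdef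
      have hvE : vS E = φ ^ (-2:ℤ) := by
        rw [hEdef, vS_erase h2m, hv, zpow_two', phi_inv_two]
        ring
      have hSrw : S = insert 2 E := (Finset.insert_erase h2m).symm
      rcases single_classify hvE with h | h | ⟨hne, ha, hb, hc⟩
      · left
        rw [hSrw, h]
        decide
      · exfalso
        rw [show (-2:ℤ)-2 = -4 by ring, show (-2:ℤ)-1 = -3 by ring] at h
        refine KF_vio' hKF (m := -4) (by rw [hSrw, h]; decide) ?_
          (by rw [hSrw, h]; decide) (by rw [hSrw, h]; decide)
        intro x hx
        rw [hSrw, h] at hx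
        simp only [Finset.mem_insert, Finset.mem_singleton] at hx
        omega
      · exfalso
        have hEsub : E ⊆ S := Finset.erase_subset _ _
        refine KF_vio' hKF (m := E.min' hne) (hEsub (E.min'_mem hne)) ?_ (hEsub ha) ?_
        · intro x hx
          rw [hSrw, Finset.mem_insert] at hx
          rcases hx with rfl | hx
          · omega
          · exact Finset.min'_le E x hx
        · rw [hSrw, Finset.mem_insert]
          push_neg
          exact ⟨by omega, hb⟩
    · have hble1 : ∀ i ∈ S, i ≤ 1 := by
        intro i hi
        have := hble i hi
        have : i ≠ 2 := fun h => h2m (h ▸ hi)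
        omega
      have h1m : (1:ℤ) ∈ S := by
        apply forcing hble1
        rw [show (1:ℤ)+1 = 2 by ring, zpow_two', hv]
        linarith
      set E1 := S.erase 1 with hE1def
      have hvE1 : vS E1 = 3 - φ := by
        rw [hE1def, vS_erase h1m, hv, phi_z1]
      have hble0 : ∀ i ∈ E1, i ≤ 0 := by
        intro i hi
        have := hble1 i (Finset.mem_of_mem_erase hi)
        have := (Finset.mem_erase.mp hi).1
        omega
      by_cases h0m : (0:ℤ) ∈ E1
      · set E2 := E1.erase 0 with hE2def
        have hvE2 : vS E2 = φ ^ (-2:ℤ) := by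
          rw [hE2def, vS_erase h0m, hvE1, phi_z0, phi_inv_two]
          ring
        have hSrw : S = insert 1 (insert 0 E2) := by
          rw [hE2def, Finset.insert_erase h0m, hE1def, Finset.insert_erase h1m]
        rcases single_classify hvE2 with h | h | ⟨hne, ha, hb, hc⟩
        · right; left
          rw [hSrw, h]
          decide
        · exfalso
          rw [show (-2:ℤ)-2 = -4 by ring, show (-2:ℤ)-1 = -3 by ring] at h
          refine KF_vio' hKF (m := -4) (by rw [hSrw, h]; decide) ?_
            (by rw [hSrw, h]; decide) (by rw [hSrw, h]; decide)
          intro x hx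
          rw [hSrw, h] at hx
          simp only [Finset.mem_insert, Finset.mem_singleton] at hx
          omega
        · exfalso
          have hEsub : E2 ⊆ S := by
            rw [hSrw]
            intro x hx
            simp only [Finset.mem_insert]
            tauto
          refine KF_vio' hKF (m := E2.min' hne) (hEsub (E2.min'_mem hne)) ?_ (hEsub ha) ?_
          · intro x hx
            rw [hSrw] at hx
            simp only [Finset.mem_insert] at hx
            rcases hx with rfl | rfl | hx
            · omega
            · omega
            · exact Finset.min'_le E2 x hx
          · rw [hSrw]
            simp only [Finset.mem_insert]
            push_neg
            exact ⟨by omega, by omega, hb⟩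
      · have hblem1 : ∀ i ∈ E1, i ≤ -1 := by
          intro i hi
          have := hble0 i hi
          have : i ≠ 0 := fun h => h0m (h ▸ hi)
          omega
        have hm1m : (-1:ℤ) ∈ E1 := by
          apply forcing hblem1
          rw [show (-1:ℤ)+1 = 0 by ring, phi_z0, hvE1]
          linarith
        set E2 := E1.erase (-1) with hE2def
        have hvE2 : vS E2 = 4 - 2*φ := by
          rw [hE2def, vS_erase hm1m, hvE1, phi_zm1]
          ring
        have hblem2 : ∀ i ∈ E2, i ≤ -2 := by
          intro i hi
          have := hblem1 i (Finset.mem_of_mem_erase hi)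
          have := (Finset.mem_erase.mp hi).1
          omega
        have hm2m : (-2:ℤ) ∈ E2 := by
          apply forcing hblem2
          rw [show (-2:ℤ)+1 = -1 by ring, phi_zm1, hvE2]
          linarith
        set E3 := E2.erase (-2) with hE3def
        have hvE3 : vS E3 = φ ^ (-2:ℤ) := by
          rw [hE3def, vS_erase hm2m, hvE2, phi_inv_two]
          ring
        have hblem3 : ∀ i ∈ E3, i ≤ -3 := by
          intro i hi
          have := hblem2 i (Finset.mem_of_mem_erase hi)
          have := (Finset.mem_erase.mp hi).1
          omega
        have hSrw : S = insert 1 (insert (-1) (insert (-2) E3)) := by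
          rw [hE3def, Finset.insert_erase hm2m, hE2def, Finset.insert_erase hm1m, hE1def,
            Finset.insert_erase h1m]
        rcases single_classify hvE3 with h | h | ⟨hne, ha, hb, hc⟩
        · exfalso
          have : (-2:ℤ) ∈ E3 := by rw [h]; decide
          have := hblem3 _ this
          omega
        · right; right
          rw [show (-2:ℤ)-2 = -4 by ring, show (-2:ℤ)-1 = -3 by ring] at h
          rw [hSrw, h]
          decide
        · exfalso
          have hEsub : E3 ⊆ S := by
            rw [hSrw]
            intro x hx
            simp only [Finset.mem_insert]
            tauto
          refine KF_vio' hKF (m := E3.min' hne) (hEsub (E3.min'_mem hne)) ?_ (hEsub ha) ?_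
          · intro x hx
            rw [hSrw] at hx
            simp only [Finset.mem_insert] at hx
            rcases hx with rfl | rfl | rfl | hx
            · omega
            · omega
            · omega
            · exact Finset.min'_le E3 x hx
          · rw [hSrw]
            simp only [Finset.mem_insert]
            push_neg
            exact ⟨by omega, by omega, by omega, hb⟩
  · have hphi := one_lt_phi
    rintro (rfl | rfl | rfl)
    · refine ⟨?_, ?_⟩
      · unfold vS
        rw [show ({-2,2} : Finset ℤ) = insert (-2) {2} from rfl,
          Finset.sum_insert (by decide), Finset.sum_singleton, phi_inv_two, zpow_two',
          cast_three]
        ring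
      · apply KF_explicit (m := -2) (by decide) (by decide)
        left; decide
    · refine ⟨?_, ?_⟩
      · unfold vS
        rw [show ({-2,0,1} : Finset ℤ) = insert (-2) (insert 0 {1}) from rfl,
          Finset.sum_insert (by decide), Finset.sum_insert (by decide), Finset.sum_singleton,
          phi_inv_two, phi_z0, phi_z1, cast_three]
        ring
      · apply KF_explicit (m := -2) (by decide) (by decide)
        left; decide
    · refine ⟨?_, ?_⟩
      · unfold vS
        rw [show ({-4,-3,-2,-1,1} : Finset ℤ) =
            insert (-4) (insert (-3) (insert (-2) (insert (-1) {1}))) from rfl,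
          Finset.sum_insert (by decide), Finset.sum_insert (by decide),
          Finset.sum_insert (by decide), Finset.sum_insert (by decide), Finset.sum_singleton,
          phi_zm4, phi_zm3, phi_inv_two, phi_zm1, phi_z1, cast_three]
        ring
      · apply KF_explicit (m := -4) (by decide) (by decide)
        right; decide


def Pred (n : ℕ) : Prop :=
  (RN (Nat.fib n)).Finite ∧ (RN (Nat.fib n)).ncard = Nat.fib n ∧
    {S | S ∈ RN (Nat.fib n) ∧ ((n:ℤ)-2) ∈ S}.ncard = Nat.fib (n-2)

lemma insert_cancel {a : ℤ} {X Y : Finset ℤ} (hX : a ∉ X) (hY : a ∉ Y)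
    (h : insert a X = insert a Y) : X = Y := by
  rw [← Finset.erase_insert hX, ← Finset.erase_insert hY, h]

lemma step {n : ℕ} (hn : 3 ≤ n) (hP : Pred n) : Pred (n+2) := by
  obtain ⟨hfin, hcard, htop⟩ := hP
  have hnm : ∀ {T : Finset ℤ}, T ∈ RN (Nat.fib n) → ∀ c : ℤ, (n:ℤ)-4 < c → c ∉ sdown T := by
    intro T hT c hc h
    obtain ⟨_, hv, hle, _, _⟩ := sdown_facts hn hT
    have := hle _ h
    omega
  have hinj1 : Set.InjOn (fun T => insert (n:ℤ) (sdown T)) (RN (Nat.fib n)) := by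
    intro T hT T' hT' heq
    exact sdown_inj (insert_cancel (hnm hT _ (by omega)) (hnm hT' _ (by omega)) heq)
  have hinj2 : Set.InjOn (fun T => insert ((n:ℤ)-1) (insert ((n:ℤ)-2) (sdown T)))
      (RN (Nat.fib n)) := by
    intro T hT T' hT' heq
    simp only at heq
    have h1 := insert_cancel (a := (n:ℤ)-1)
      (by simp only [Finset.mem_insert]; push_neg
          exact ⟨by omega, hnm hT _ (by omega)⟩)
      (by simp only [Finset.mem_insert]; push_neg
          exact ⟨by omega, hnm hT' _ (by omega)⟩) heq
    exact sdown_inj (insert_cancel (hnm hT _ (by omega)) (hnm hT' _ (by omega)) h1)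
  have hinj3 : Set.InjOn
      (fun T => insert ((n:ℤ)-1) (insert ((n:ℤ)-3) (insert ((n:ℤ)-4) (sdown T))))
      {T | T ∈ RN (Nat.fib n) ∧ ∀ i ∈ T, i ≤ (n:ℤ)-3} := by
    intro T hT T' hT' heq
    simp only at heq
    have hd : ∀ {U : Finset ℤ}, U ∈ RN (Nat.fib n) → (∀ i ∈ U, i ≤ (n:ℤ)-3) →
        ∀ c : ℤ, (n:ℤ)-5 < c → c ∉ sdown U := by
      intro U hU hU3 c hc h
      have := hU3 _ (mem_sdown.mp h)
      omega
    have h1 := insert_cancel (a := (n:ℤ)-1)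
      (by simp only [Finset.mem_insert]; push_neg
          exact ⟨by omega, by omega, hd hT.1 hT.2 _ (by omega)⟩)
      (by simp only [Finset.mem_insert]; push_neg
          exact ⟨by omega, by omega, hd hT'.1 hT'.2 _ (by omega)⟩) heq
    have h2 := insert_cancel (a := (n:ℤ)-3)
      (by simp only [Finset.mem_insert]; push_neg
          exact ⟨by omega, hd hT.1 hT.2 _ (by omega)⟩)
      (by simp only [Finset.mem_insert]; push_neg
          exact ⟨by omega, hd hT'.1 hT'.2 _ (by omega)⟩) h1
    exact sdown_inj (insert_cancel (hd hT.1 hT.2 _ (by omega)) (hd hT'.1 hT'.2 _ (by omega)) h2)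
  set DA := {S | S ∈ RN (Nat.fib (n+2)) ∧ (n:ℤ) ∈ S} with hDAdef
  set DB := {S | S ∈ RN (Nat.fib (n+2)) ∧ (n:ℤ) ∉ S ∧ (n:ℤ)-2 ∈ S} with hDBdef
  set DC := {S | S ∈ RN (Nat.fib (n+2)) ∧ (n:ℤ) ∉ S ∧ (n:ℤ)-2 ∉ S} with hDCdef
  set D3 := {T | T ∈ RN (Nat.fib n) ∧ ∀ i ∈ T, i ≤ (n:ℤ)-3} with hD3def
  have hD3eq : D3 = RN (Nat.fib n) \ {S | S ∈ RN (Nat.fib n) ∧ ((n:ℤ)-2) ∈ S} := by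
    ext T
    simp only [hD3def, Set.mem_setOf_eq, Set.mem_diff]
    constructor
    · rintro ⟨hT, hb⟩
      exact ⟨hT, fun hc => by have := hb _ hc.2; omega⟩
    · rintro ⟨hT, hb⟩
      refine ⟨hT, fun i hi => ?_⟩
      obtain ⟨_, hle, _⟩ := RN_facts hn hT
      have h1 := hle i hi
      have h2 : i ≠ (n:ℤ)-2 := fun h => hb ⟨hT, h ▸ hi⟩
      omega
  have hD3fin : D3.Finite := hfin.subset (fun T hT => hT.1)
  have hsubtop : {S | S ∈ RN (Nat.fib n) ∧ ((n:ℤ)-2) ∈ S} ⊆ RN (Nat.fib n) :=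
    fun S hS => hS.1
  have hD3card : D3.ncard = Nat.fib n - Nat.fib (n-2) := by
    rw [hD3eq, Set.ncard_diff hsubtop (hfin.subset hsubtop), hcard, htop]
  have hAcard : DA.ncard = Nat.fib n := by
    rw [hDAdef, caseA hn, Set.ncard_image_of_injOn hinj1, hcard]
  have hBcard : DB.ncard = Nat.fib n := by
    rw [hDBdef, caseB2 hn, Set.ncard_image_of_injOn hinj2, hcard]
  have hCcard : DC.ncard = Nat.fib n - Nat.fib (n-2) := by
    rw [hDCdef, caseB3 hn, Set.ncard_image_of_injOn hinj3, hD3card]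
  have hAfin : DA.Finite := by
    rw [hDAdef, caseA hn]; exact hfin.image _
  have hBfin : DB.Finite := by
    rw [hDBdef, caseB2 hn]; exact hfin.image _
  have hCfin : DC.Finite := by
    rw [hDCdef, caseB3 hn]; exact hD3fin.image _
  have hU : RN (Nat.fib (n+2)) = DA ∪ DB ∪ DC := by
    ext S
    simp only [hDAdef, hDBdef, hDCdef, Set.mem_union, Set.mem_setOf_eq]
    constructor
    · intro hS
      by_cases h1 : (n:ℤ) ∈ S
      · exact Or.inl (Or.inl ⟨hS, h1⟩)
      · by_cases h2 : (n:ℤ)-2 ∈ S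
        · exact Or.inl (Or.inr ⟨hS, h1, h2⟩)
        · exact Or.inr ⟨hS, h1, h2⟩
    · rintro ((h | h) | h) <;> exact h.1
  have hdisj2 : Disjoint DB DC := by
    rw [Set.disjoint_left]
    rintro S ⟨_, _, h2⟩ ⟨_, _, h2'⟩
    exact h2' h2
  have hdisj1 : Disjoint DA (DB ∪ DC) := by
    rw [Set.disjoint_left]
    rintro S ⟨_, h1⟩ (⟨_, h2, _⟩ | ⟨_, h2, _⟩) <;> exact h2 h1
  have hfin2 : (RN (Nat.fib (n+2))).Finite := by
    rw [hU]
    exact (hAfin.union (hBfin.union hCfin)).subset (by rw [Set.union_assoc])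
  have hcard2 : (RN (Nat.fib (n+2))).ncard = Nat.fib (n+2) := by
    rw [hU, Set.union_assoc, Set.ncard_union_eq hdisj1 hAfin (hBfin.union hCfin),
      Set.ncard_union_eq hdisj2 hBfin hCfin, hAcard, hBcard, hCcard]
    have e1 : Nat.fib (n+2) = Nat.fib n + Nat.fib (n+1) := Nat.fib_add_two
    have e2 : Nat.fib (n+1) = Nat.fib (n-1) + Nat.fib n := by
      have := Nat.fib_add_two (n := n-1)
      rw [show (n-1)+2 = n+1 by omega, show (n-1)+1 = n by omega] at this
      exact this
    have e3 : Nat.fib n = Nat.fib (n-2) + Nat.fib (n-1) := by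
      have := Nat.fib_add_two (n := n-2)
      rw [show (n-2)+2 = n by omega, show (n-2)+1 = n-1 by omega] at this
      exact this
    omega
  refine ⟨hfin2, hcard2, ?_⟩
  have hseteq : {S | S ∈ RN (Nat.fib (n+2)) ∧ (((n+2:ℕ)):ℤ)-2 ∈ S} = DA := by
    rw [hDAdef]
    ext S
    simp only [Set.mem_setOf_eq]
    have : (((n+2:ℕ)):ℤ)-2 = (n:ℤ) := by push_cast; ring
    rw [this]
  rw [hseteq, hAcard, show (n+2)-2 = n by omega]


lemma fib3 : Nat.fib 3 = 2 := by decide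
lemma fib4 : Nat.fib 4 = 3 := by decide

lemma Pred3 : Pred 3 := by
  have hne : ({-2, 1} : Finset ℤ) ≠ ({-2,-1,0} : Finset ℤ) := by decide
  refine ⟨?_, ?_, ?_⟩
  · rw [fib3, RN_two]
    exact (Set.finite_singleton _).insert _
  · rw [fib3, RN_two, Set.ncard_pair hne]
  · have hset : {S | S ∈ RN (Nat.fib 3) ∧ ((3:ℕ):ℤ)-2 ∈ S} = {({-2,1} : Finset ℤ)} := by
      ext S
      simp only [Set.mem_setOf_eq, Set.mem_singleton_iff, fib3, RN_two]
      constructor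
      · rintro ⟨(rfl | rfl), hm⟩
        · rfl
        · exfalso; revert hm; decide
      · rintro rfl
        exact ⟨Or.inl rfl, by decide⟩
    rw [hset, Set.ncard_singleton]
    decide

lemma Pred4 : Pred 4 := by
  have h12 : ({-2, 2} : Finset ℤ) ≠ ({-2,0,1} : Finset ℤ) := by decide
  have h13 : ({-2, 2} : Finset ℤ) ≠ ({-4,-3,-2,-1,1} : Finset ℤ) := by decide
  have h23 : ({-2,0,1} : Finset ℤ) ≠ ({-4,-3,-2,-1,1} : Finset ℤ) := by decide
  refine ⟨?_, ?_, ?_⟩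
  · rw [fib4, RN_three]
    exact ((Set.finite_singleton _).insert _).insert _
  · rw [fib4, RN_three]
    have hnm : ({-2,2} : Finset ℤ) ∉ ({({-2,0,1} : Finset ℤ), ({-4,-3,-2,-1,1} : Finset ℤ)} : Set (Finset ℤ)) := by
      simp only [Set.mem_insert_iff, Set.mem_singleton_iff]
      push_neg
      exact ⟨h12, h13⟩
    rw [Set.ncard_insert_of_notMem hnm ((Set.finite_singleton _).insert _),
      Set.ncard_pair h23]
  · have hset : {S | S ∈ RN (Nat.fib 4) ∧ ((4:ℕ):ℤ)-2 ∈ S} = {({-2,2} : Finset ℤ)} := by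
      ext S
      simp only [Set.mem_setOf_eq, Set.mem_singleton_iff, fib4, RN_three]
      constructor
      · rintro ⟨(rfl | rfl | rfl), hm⟩
        · rfl
        · exfalso; revert hm; decide
        · exfalso; revert hm; decide
      · rintro rfl
        exact ⟨Or.inl rfl, by decide⟩
    rw [hset, Set.ncard_singleton]
    decide

lemma Pred_all {n : ℕ} (hn : 3 ≤ n) : Pred n := by
  have key : ∀ m : ℕ, Pred (m+3) ∧ Pred (m+4) := by
    intro m
    induction m with
    | zero => exact ⟨Pred3, Pred4⟩
    | succ k ih =>
      refine ⟨ih.2, ?_⟩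
      have := step (n := k+3) (by omega) ih.1
      rwa [show k+3+2 = k+1+4 by ring] at this
  have := (key (n-3)).1
  rwa [show n-3+3 = n by omega] at this

lemma RN_fib_finite_card {n : ℕ} (hn : 1 ≤ n) :
    (RN (Nat.fib n)).Finite ∧ (RN (Nat.fib n)).ncard = Nat.fib n := by
  match n, hn with
  | 1, _ => exact ⟨by rw [show Nat.fib 1 = 1 from rfl, RN_one]; exact Set.finite_singleton _,
      by rw [show Nat.fib 1 = 1 from rfl, RN_one, Set.ncard_singleton]⟩
  | 2, _ => exact ⟨by rw [show Nat.fib 2 = 1 from rfl, RN_one]; exact Set.finite_singleton _,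
      by rw [show Nat.fib 2 = 1 from rfl, RN_one, Set.ncard_singleton]⟩
  | (m+3), _ =>
    have h := Pred_all (n := m+3) (by omega)
    exact ⟨h.1, h.2.1⟩


def ind (S : Finset ℤ) : ℤ →₀ ℕ :=
  ⟨S, fun i => if i ∈ S then 1 else 0, by
    intro a
    by_cases h : a ∈ S <;> simp [h]⟩

lemma ind_support (S : Finset ℤ) : (ind S).support = S := rfl
lemma ind_apply (S : Finset ℤ) (i : ℤ) : ind S i = if i ∈ S then 1 else 0 := rfl

lemma ind_inj {S T : Finset ℤ} (h : ind S = ind T) : S = T := by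
  rw [← ind_support S, ← ind_support T, h]

lemma KnottSet_eq (N : ℕ) : KnottSet N = ind '' (RN N) := by
  ext a
  simp only [KnottSet, Set.mem_setOf_eq, Set.mem_image, IsBasePhiRep, KnottCond]
  constructor
  · rintro ⟨⟨hle, hsum⟩, hKC⟩
    refine ⟨a.support, ⟨?_, ?_⟩, ?_⟩
    · unfold vS
      rw [hsum]
      apply Finset.sum_congr rfl
      intro i hi
      have h1 : a i ≠ 0 := Finsupp.mem_support_iff.mp hi
      have h2 := hle i
      have h3 : a i = 1 := by omega
      rw [h3]
      norm_num
    · intro m hm hc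
      apply hKC m hm
      constructor
      · have h1 : a (m+1) ≠ 0 := Finsupp.mem_support_iff.mp hc.1
        have h2 := hle (m+1)
        omega
      · exact Finsupp.notMem_support_iff.mp hc.2
    · ext i
      rw [ind_apply]
      by_cases h : i ∈ a.support
      · rw [if_pos h]
        have h1 : a i ≠ 0 := Finsupp.mem_support_iff.mp h
        have h2 := hle i
        omega
      · rw [if_neg h]
        exact (Finsupp.notMem_support_iff.mp h).symm
  · rintro ⟨S, ⟨hv, hKF⟩, rfl⟩
    refine ⟨⟨?_, ?_⟩, ?_⟩
    · intro i
      rw [ind_apply]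
      split <;> omega
    · rw [ind_support, ← hv]
      unfold vS
      apply Finset.sum_congr rfl
      intro i hi
      rw [ind_apply, if_pos hi]
      norm_num
    · intro m hm hc
      rw [ind_support] at hm
      apply hKF m hm
      constructor
      · have h1 := hc.1
        rw [ind_apply] at h1
        by_contra h
        rw [if_neg h] at h1
        exact absurd h1 (by norm_num)
      · intro h
        have h2 := hc.2
        rw [ind_apply, if_pos h] at h2
        exact absurd h2 (by norm_num)

end KProof

/-- The number of Knott base-phi expansions of the `n`-th Fibonacci number
is `F_n` itself. -/
theorem card_knottSet_fib (n : ℕ) (hn : 1 ≤ n) :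
    (KnottSet (Nat.fib n)).Finite ∧ (KnottSet (Nat.fib n)).ncard = Nat.fib n := by
  obtain ⟨hfin, hcard⟩ := KProof.RN_fib_finite_card hn
  constructor
  · rw [KProof.KnottSet_eq]
    exact hfin.image _
  · rw [KProof.KnottSet_eq,
      Set.ncard_image_of_injOn (fun S _ T _ h => KProof.ind_inj h), hcard]
end
end
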